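/- arXiv:1209.4990 — 10 statements merged into one kernel-verified Lean document; each statement's English description precedes it below -/
import Mathlib

section
/- For all m, n ∈ ℕ, ρ > 0 and z ∈ ℂ, applying the complex creation operators iteratively to the constant function 1 produces the Hermite–Laguerre–Ito polynomial: ρ^{m+n} · ((∂*)^m (∂̄*)^n 1)(z) = J_{m,n}(z,ρ), i.e. ρ^{m+n} ((∂*)^m (∂̄*)^n 1)(z) = ∑_{r=0}^{min(m,n)} (−1)^r · r! · C(m,r) · C(n,r) · z^{m−r} · conj(z)^{n−r} · ρ^r. -/
open MeasureTheory Complex Finset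

noncomputable section

/-- Hermite–Laguerre–Ito polynomial. -/
def HLI (m n : ℕ) (z : ℂ) (ρ : ℝ) : ℂ :=
  ∑ r ∈ Finset.range (min m n + 1),
    (-1 : ℂ) ^ r * (r.factorial : ℂ) * (m.choose r : ℂ) * (n.choose r : ℂ) *
      z ^ (m - r) * (starRingEnd ℂ z) ^ (n - r) * (ρ : ℂ) ^ r

/-- partial derivative in x -/
def pdx (f : ℝ × ℝ → ℂ) (p : ℝ × ℝ) : ℂ := deriv (fun x : ℝ => f (x, p.2)) p.1

/-- partial derivative in y -/
def pdy (f : ℝ × ℝ → ℂ) (p : ℝ × ℝ) : ℂ := deriv (fun y : ℝ => f (p.1, y)) p.2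

/-- Wirtinger derivative ∂ -/
def wd (f : ℝ × ℝ → ℂ) (p : ℝ × ℝ) : ℂ := (1 / 2 : ℂ) * (pdx f p - Complex.I * pdy f p)

/-- Wirtinger derivative ∂̄ -/
def wdb (f : ℝ × ℝ → ℂ) (p : ℝ × ℝ) : ℂ := (1 / 2 : ℂ) * (pdx f p + Complex.I * pdy f p)

/-- complex creation operator ∂* -/
def cre (ρ : ℝ) (f : ℝ × ℝ → ℂ) : ℝ × ℝ → ℂ :=
  fun p => -(wdb f p) + ((p.1 + p.2 * Complex.I) / (ρ : ℂ)) * f p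

/-- complex creation operator ∂̄* -/
def creb (ρ : ℝ) (f : ℝ × ℝ → ℂ) : ℝ × ℝ → ℂ :=
  fun p => -(wd f p) + ((starRingEnd ℂ) (p.1 + p.2 * Complex.I) / (ρ : ℂ)) * f p

/-- coefficient -/
def cf (m n r : ℕ) : ℂ := (-1 : ℂ) ^ r * (r.factorial : ℂ) * (m.choose r : ℂ) * (n.choose r : ℂ)

/-- S': HLI with the sum extended to range (m+1) and w an independent variable -/
def S' (m n : ℕ) (z w ρ : ℂ) : ℂ :=
  ∑ r ∈ Finset.range (m + 1), cf m n r * z ^ (m - r) * w ^ (n - r) * ρ ^ r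

def Zc (p : ℝ × ℝ) : ℂ := p.1 + p.2 * Complex.I
def Wc (p : ℝ × ℝ) : ℂ := p.1 - p.2 * Complex.I

lemma hdx (m n : ℕ) (ρc c : ℂ) (p : ℝ × ℝ) :
    HasDerivAt (fun x : ℝ => S' m n (Zc (x, p.2)) (Wc (x, p.2)) ρc * c)
      ((∑ r ∈ Finset.range (m + 1), cf m n r *
          (((m - r : ℕ) : ℂ) * Zc p ^ (m - r - 1) * Wc p ^ (n - r)
            + Zc p ^ (m - r) * (((n - r : ℕ) : ℂ) * Wc p ^ (n - r - 1))) * ρc ^ r) * c) p.1 := by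
  have h1 : HasDerivAt (fun t : ℝ => ((t : ℂ) + (p.2 : ℂ) * Complex.I)) 1 p.1 := by
    simpa using ((hasDerivAt_id p.1).ofReal_comp.add_const ((p.2 : ℂ) * Complex.I))
  have h2 : HasDerivAt (fun t : ℝ => ((t : ℂ) - (p.2 : ℂ) * Complex.I)) 1 p.1 := by
    simpa using ((hasDerivAt_id p.1).ofReal_comp.sub_const ((p.2 : ℂ) * Complex.I))
  simp only [S', Zc, Wc]
  refine HasDerivAt.mul_const ?_ c
  refine HasDerivAt.fun_sum (𝕜 := ℝ) (F := ℂ) fun r _ => ?_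
  have hp1 := (hasDerivAt_pow (m - r) ((p.1 : ℂ) + (p.2 : ℂ) * Complex.I)).comp p.1 h1
  have hp2 := (hasDerivAt_pow (n - r) ((p.1 : ℂ) - (p.2 : ℂ) * Complex.I)).comp p.1 h2
  have := ((hp1.const_mul (cf m n r)).mul hp2).mul_const (ρc ^ r)
  convert this using 1
  · rfl
  · rfl
  simp only [Function.comp_apply]
  ring

lemma hdy (m n : ℕ) (ρc c : ℂ) (p : ℝ × ℝ) :
    HasDerivAt (fun y : ℝ => S' m n (Zc (p.1, y)) (Wc (p.1, y)) ρc * c)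
      ((∑ r ∈ Finset.range (m + 1), cf m n r *
          (((m - r : ℕ) : ℂ) * Zc p ^ (m - r - 1) * Wc p ^ (n - r) * Complex.I
            - Zc p ^ (m - r) * (((n - r : ℕ) : ℂ) * Wc p ^ (n - r - 1)) * Complex.I) * ρc ^ r) * c) p.2 := by
  have h1 : HasDerivAt (fun t : ℝ => ((p.1 : ℂ) + (t : ℂ) * Complex.I)) Complex.I p.2 := by
    simpa using (((hasDerivAt_id p.2).ofReal_comp.mul_const Complex.I).const_add (p.1 : ℂ))
  have h2 : HasDerivAt (fun t : ℝ => ((p.1 : ℂ) - (t : ℂ) * Complex.I)) (-Complex.I) p.2 := by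
    simpa using (((hasDerivAt_id p.2).ofReal_comp.mul_const Complex.I).const_sub (p.1 : ℂ))
  simp only [S', Zc, Wc]
  refine HasDerivAt.mul_const ?_ c
  refine HasDerivAt.fun_sum (𝕜 := ℝ) (F := ℂ) fun r _ => ?_
  have hp1 := (hasDerivAt_pow (m - r) ((p.1 : ℂ) + (p.2 : ℂ) * Complex.I)).comp p.2 h1
  have hp2 := (hasDerivAt_pow (n - r) ((p.1 : ℂ) - (p.2 : ℂ) * Complex.I)).comp p.2 h2
  have := ((hp1.const_mul (cf m n r)).mul hp2).mul_const (ρc ^ r)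
  convert this using 1
  · rfl
  · rfl
  simp only [Function.comp_apply]
  ring

lemma wdb_S' (m n : ℕ) (ρc c : ℂ) (p : ℝ × ℝ) :
    wdb (fun q => S' m n (Zc q) (Wc q) ρc * c) p
      = (∑ r ∈ Finset.range (m + 1),
          cf m n r * Zc p ^ (m - r) * (((n - r : ℕ) : ℂ) * Wc p ^ (n - r - 1)) * ρc ^ r) * c := by
  rw [wdb, pdx, pdy, (hdx m n ρc c p).deriv, (hdy m n ρc c p).deriv]
  rw [Finset.sum_mul, Finset.sum_mul, Finset.mul_sum, ← Finset.sum_add_distrib,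
    Finset.mul_sum, Finset.sum_mul]
  refine Finset.sum_congr rfl fun r _ => ?_
  set A := ((m - r : ℕ) : ℂ) * Zc p ^ (m - r - 1) * Wc p ^ (n - r)
  set B := Zc p ^ (m - r) * (((n - r : ℕ) : ℂ) * Wc p ^ (n - r - 1))
  linear_combination ((1 / 2 : ℂ) * cf m n r * ρc ^ r * c * (A - B)) * Complex.I_sq

lemma wd_S' (m n : ℕ) (ρc c : ℂ) (p : ℝ × ℝ) :
    wd (fun q => S' m n (Zc q) (Wc q) ρc * c) p
      = (∑ r ∈ Finset.range (m + 1),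
          cf m n r * (((m - r : ℕ) : ℂ) * Zc p ^ (m - r - 1)) * Wc p ^ (n - r) * ρc ^ r) * c := by
  rw [wd, pdx, pdy, (hdx m n ρc c p).deriv, (hdy m n ρc c p).deriv]
  rw [Finset.sum_mul, Finset.sum_mul, Finset.mul_sum, ← Finset.sum_sub_distrib,
    Finset.mul_sum, Finset.sum_mul]
  refine Finset.sum_congr rfl fun r _ => ?_
  set A := ((m - r : ℕ) : ℂ) * Zc p ^ (m - r - 1) * Wc p ^ (n - r)
  set B := Zc p ^ (m - r) * (((n - r : ℕ) : ℂ) * Wc p ^ (n - r - 1))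
  linear_combination ((1 / 2 : ℂ) * cf m n r * ρc ^ r * c * (B - A)) * Complex.I_sq


lemma key_choose (n r : ℕ) : (r + 1) * n.choose (r + 1) = n * (n - 1).choose r := by
  rcases Nat.eq_zero_or_pos n with hn | hn
  · simp [hn, Nat.choose_eq_zero_of_lt]
  · have hn1 : n - 1 + 1 = n := by omega
    have h := Nat.add_one_mul_choose_eq (n - 1) r
    rw [hn1] at h
    rw [mul_comm]
    exact h.symm

lemma key_choose2 (n r : ℕ) : (n - r) * n.choose r = n * (n - 1).choose r := by
  have h2 := Nat.choose_succ_right_eq n r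
  have h1 := key_choose n r
  calc (n - r) * n.choose r = n.choose r * (n - r) := mul_comm _ _
    _ = n.choose (r + 1) * (r + 1) := h2.symm
    _ = (r + 1) * n.choose (r + 1) := mul_comm _ _
    _ = n * (n - 1).choose r := h1

lemma L1 (m n : ℕ) (z w ρ : ℂ) :
    ∑ r ∈ Finset.range (m + 1),
        cf m n r * z ^ (m - r) * (((n - r : ℕ) : ℂ) * w ^ (n - r - 1)) * ρ ^ r
      = (n : ℂ) * S' m (n - 1) z w ρ := by
  rw [S', Finset.mul_sum]
  refine Finset.sum_congr rfl fun r _ => ?_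
  have e : n - r - 1 = n - 1 - r := by omega
  have k : ((n - r : ℕ) : ℂ) * (n.choose r : ℂ) = (n : ℂ) * ((n - 1).choose r : ℂ) := by
    exact_mod_cast congrArg (fun t : ℕ => (t : ℂ)) (key_choose2 n r)
  rw [e]
  simp only [cf]
  linear_combination ((-1 : ℂ) ^ r * (r.factorial : ℂ) * (m.choose r : ℂ) * z ^ (m - r) *
    w ^ (n - 1 - r) * ρ ^ r) * k

lemma L2 (m n : ℕ) (z w ρ : ℂ) :
    S' (m + 1) n z w ρ = z * S' m n z w ρ - (n : ℂ) * ρ * S' m (n - 1) z w ρ := by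
  conv_lhs => rw [S', Finset.sum_range_succ']
  have hsplit : ∀ r ∈ Finset.range (m + 1),
      cf (m + 1) n (r + 1) * z ^ (m + 1 - (r + 1)) * w ^ (n - (r + 1)) * ρ ^ (r + 1)
        = cf m n (r + 1) * z ^ (m - r) * w ^ (n - (r + 1)) * ρ ^ (r + 1)
          + ((-1 : ℂ) ^ (r + 1) * ((r + 1).factorial : ℂ) * (m.choose r : ℂ) *
              (n.choose (r + 1) : ℂ)) * z ^ (m - r) * w ^ (n - (r + 1)) * ρ ^ (r + 1) := by
    intro r _
    have hm : m + 1 - (r + 1) = m - r := by omega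
    have hp : (m + 1).choose (r + 1) = m.choose r + m.choose (r + 1) := Nat.choose_succ_succ m r
    rw [hm]
    simp only [cf, hp]
    push_cast
    ring
  rw [Finset.sum_congr rfl hsplit, Finset.sum_add_distrib]
  have hB : ∑ r ∈ Finset.range (m + 1),
      ((-1 : ℂ) ^ (r + 1) * ((r + 1).factorial : ℂ) * (m.choose r : ℂ) *
          (n.choose (r + 1) : ℂ)) * z ^ (m - r) * w ^ (n - (r + 1)) * ρ ^ (r + 1)
      = -((n : ℂ) * ρ * S' m (n - 1) z w ρ) := by
    rw [S', Finset.mul_sum, ← Finset.sum_neg_distrib]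
    refine Finset.sum_congr rfl fun r _ => ?_
    have e : n - (r + 1) = n - 1 - r := by omega
    have k : (((r + 1) : ℕ) : ℂ) * (n.choose (r + 1) : ℂ)
        = (n : ℂ) * ((n - 1).choose r : ℂ) := by
      exact_mod_cast congrArg (fun t : ℕ => (t : ℂ)) (key_choose n r)
    push_cast at k
    rw [e]
    simp only [cf, Nat.factorial_succ]
    push_cast
    linear_combination ((-1 : ℂ) ^ (r + 1) * (r.factorial : ℂ) * (m.choose r : ℂ) *
      z ^ (m - r) * w ^ (n - 1 - r) * ρ ^ (r + 1)) * k
  have hz : (∑ r ∈ Finset.range (m + 1),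
        cf m n (r + 1) * z ^ (m - r) * w ^ (n - (r + 1)) * ρ ^ (r + 1))
        + cf (m + 1) n 0 * z ^ (m + 1 - 0) * w ^ (n - 0) * ρ ^ 0
      = z * S' m n z w ρ := by
    conv_rhs => rw [S', Finset.mul_sum, Finset.sum_range_succ']
    rw [Finset.sum_range_succ]
    have hlast : cf m n (m + 1) = 0 := by
      simp [cf, Nat.choose_eq_zero_of_lt]
    rw [hlast]
    simp only [zero_mul, add_zero, mul_zero]
    congr 1
    · refine Finset.sum_congr rfl fun r hr => ?_
      have hr' : r < m := Finset.mem_range.mp hr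
      have hzz : z ^ (m - r) = z * z ^ (m - (r + 1)) := by
        rw [← pow_succ']
        congr 1
        omega
      rw [hzz]
      ring
    · have h0 : cf (m + 1) n 0 = 1 := by simp [cf]
      have h0' : cf m n 0 = 1 := by simp [cf]
      rw [h0, h0']
      have hzz2 : z ^ (m + 1 - 0) = z * z ^ (m - 0) := by
        rw [← pow_succ']
        congr 1
      rw [hzz2]
      ring
  linear_combination hz + hB


lemma conj_Zc (p : ℝ × ℝ) :
    (starRingEnd ℂ) ((p.1 : ℂ) + (p.2 : ℂ) * Complex.I) = Wc p := by
  simp [Wc, sub_eq_add_neg]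

lemma S'_zero (j : ℕ) (z w ρ : ℂ) : S' 0 j z w ρ = w ^ j := by
  simp [S', cf]

lemma creb_iter (ρ : ℝ) (hρ : (ρ : ℂ) ≠ 0) (n : ℕ) :
    (creb ρ)^[n] (fun _ => (1 : ℂ))
      = fun p => S' 0 n (Zc p) (Wc p) (ρ : ℂ) * (((ρ : ℂ)) ^ n)⁻¹ := by
  induction n with
  | zero => funext p; simp [S', cf]
  | succ k ih =>
    rw [Function.iterate_succ_apply', ih]
    funext p
    simp only [creb]
    rw [wd_S' 0 k (ρ : ℂ) (((ρ : ℂ)) ^ k)⁻¹ p, conj_Zc]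
    have h0 : (∑ r ∈ Finset.range (0 + 1),
        cf 0 k r * (((0 - r : ℕ) : ℂ) * Zc p ^ (0 - r - 1)) * Wc p ^ (k - r) * (ρ : ℂ) ^ r) = 0 := by
      simp [cf]
    rw [h0, zero_mul, S'_zero, S'_zero, pow_succ]
    field_simp
    ring

lemma cre_iter (ρ : ℝ) (hρ : (ρ : ℂ) ≠ 0) (n m : ℕ) :
    (cre ρ)^[m] ((creb ρ)^[n] (fun _ => (1 : ℂ)))
      = fun p => S' m n (Zc p) (Wc p) (ρ : ℂ) * (((ρ : ℂ)) ^ (m + n))⁻¹ := by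
  induction m with
  | zero =>
    rw [Function.iterate_zero_apply, creb_iter ρ hρ n]
    norm_num
  | succ m ih =>
    rw [Function.iterate_succ_apply', ih]
    funext p
    simp only [cre]
    rw [wdb_S' m n (ρ : ℂ) (((ρ : ℂ)) ^ (m + n))⁻¹ p,
      L1 m n (Zc p) (Wc p) (ρ : ℂ),
      L2 m n (Zc p) (Wc p) (ρ : ℂ)]
    rw [show ((p.1 : ℂ) + (p.2 : ℂ) * Complex.I) = Zc p from rfl]
    rw [show m + 1 + n = (m + n) + 1 from by omega, pow_succ]
    field_simp
    ring

lemma HLI_eq_S' (m n : ℕ) (z : ℂ) (ρ : ℝ) :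
    HLI m n z ρ = S' m n z ((starRingEnd ℂ) z) (ρ : ℂ) := by
  rw [HLI, S']
  simp only [cf]
  refine Finset.sum_subset (Finset.range_subset_range.mpr (by omega)) ?_
  intro r hr hns
  have h1 : r ≤ m := by
    have := Finset.mem_range.mp hr
    omega
  have h2 : min m n < r := by
    by_contra h
    exact hns (Finset.mem_range.mpr (by omega))
  have : n.choose r = 0 := Nat.choose_eq_zero_of_lt (by omega)
  simp [this]

/-- applying the complex creation operators iteratively to the
constant function 1 produces the Hermite–Laguerre–Ito polynomial. -/
theorem stmt0 (m n : ℕ) (ρ : ℝ) (hρ : 0 < ρ) (p : ℝ × ℝ) :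
    (ρ : ℂ) ^ (m + n) * ((cre ρ)^[m] ((creb ρ)^[n] (fun _ => 1)) p) =
      HLI m n (p.1 + p.2 * Complex.I) ρ := by
  have hρc : (ρ : ℂ) ≠ 0 := Complex.ofReal_ne_zero.mpr hρ.ne'
  rw [cre_iter ρ hρc n m]
  show (ρ : ℂ) ^ (m + n) * (S' m n (Zc p) (Wc p) (ρ : ℂ) * (((ρ : ℂ)) ^ (m + n))⁻¹)
      = HLI m n ((p.1 : ℂ) + (p.2 : ℂ) * Complex.I) ρ
  rw [HLI_eq_S']
  rw [show (starRingEnd ℂ) ((p.1 : ℂ) + (p.2 : ℂ) * Complex.I) = Wc p from conj_Zc p]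
  rw [show ((p.1 : ℂ) + (p.2 : ℂ) * Complex.I) = Zc p from rfl]
  field_simp


end
end

section
/- For all m, n ∈ ℕ, the Hermite–Laguerre–Ito polynomials are eigenfunctions of the 2-dimensional normal Ornstein–Uhlenbeck operator: A F_{m,n} = (−(m+n) r − i (m−n) Ω) · F_{m,n} pointwise on ℝ², where ρ = 2σ²/r. -/
open MeasureTheory Complex Finset

noncomputable section

/-- the Hermite–Laguerre–Ito polynomial as a function on ℝ². -/
def F (ρ : ℝ) (m n : ℕ) (p : ℝ × ℝ) : ℂ := HLI m n (p.1 + p.2 * Complex.I) ρ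

/-- the 2-dimensional normal Ornstein–Uhlenbeck operator
`A f = (−rx+Ωy) ∂f/∂x + (−Ωx−ry) ∂f/∂y + σ² (∂²f/∂x² + ∂²f/∂y²)`. -/
def OUop (r Ω σ2 : ℝ) (f : ℝ × ℝ → ℂ) (p : ℝ × ℝ) : ℂ :=
  ((-r * p.1 + Ω * p.2 : ℝ) : ℂ) * pdx f p + ((-Ω * p.1 - r * p.2 : ℝ) : ℂ) * pdy f p +
    (σ2 : ℂ) * (pdx (fun q => pdx f q) p + pdy (fun q => pdy f q) p)

/-! ### Auxiliary machinery -/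

lemma hpow {u : ℝ → ℂ} {u' : ℂ} {x : ℝ} (h : HasDerivAt u u' x) (k : ℕ) :
    HasDerivAt (fun t => u t ^ k) ((k:ℂ) * u x ^ (k-1) * u') x := by
  induction k with
  | zero => simpa using hasDerivAt_const x (1:ℂ)
  | succ k ih =>
    have := ih.fun_mul h
    have h2 : HasDerivAt (fun t => u t ^ (k+1))
        ((k:ℂ) * u x ^ (k-1) * u' * u x + u x ^ k * u') x := by
      simpa [pow_succ] using this
    convert h2 using 1
    cases k with
    | zero => simp
    | succ k => push_cast; simp [pow_succ]; ring

/-- finite sums of monomials in `z = x + iy` and `w = x - iy`. -/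
def Sf (s : Finset ℕ) (c : ℕ → ℂ) (f g : ℕ → ℕ) (x y : ℝ) : ℂ :=
  ∑ k ∈ s, c k * ((x:ℂ) + (y:ℂ)*Complex.I)^(f k) * ((x:ℂ) - (y:ℂ)*Complex.I)^(g k)

lemma hz (y x : ℝ) : HasDerivAt (fun t : ℝ => ((t:ℂ) + (y:ℂ)*Complex.I)) 1 x :=
  Complex.ofRealCLM.hasDerivAt.add_const _

lemma hw (y x : ℝ) : HasDerivAt (fun t : ℝ => ((t:ℂ) - (y:ℂ)*Complex.I)) 1 x :=
  Complex.ofRealCLM.hasDerivAt.sub_const _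

lemma hzy (x y : ℝ) : HasDerivAt (fun t : ℝ => ((x:ℂ) + (t:ℂ)*Complex.I)) Complex.I y := by
  have := (Complex.ofRealCLM.hasDerivAt (x := y)).mul_const Complex.I
  simpa using this.const_add (x:ℂ)

lemma hwy (x y : ℝ) : HasDerivAt (fun t : ℝ => ((x:ℂ) - (t:ℂ)*Complex.I)) (-Complex.I) y := by
  have := (Complex.ofRealCLM.hasDerivAt (x := y)).mul_const Complex.I
  simpa using (this.const_sub (x:ℂ))

lemma Sf_hasDerivAt_x (s : Finset ℕ) (c : ℕ → ℂ) (f g : ℕ → ℕ) (x y : ℝ) :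
    HasDerivAt (fun t : ℝ => Sf s c f g t y)
      (Sf s (fun k => c k * (f k : ℂ)) (fun k => f k - 1) g x y
        + Sf s (fun k => c k * (g k : ℂ)) f (fun k => g k - 1) x y) x := by
  unfold Sf
  rw [← Finset.sum_add_distrib]
  refine HasDerivAt.fun_sum fun k _ => ?_
  have h1 := (hpow (hz y x) (f k)).const_mul (c k)
  have h2 := hpow (hw y x) (g k)
  have := h1.fun_mul h2
  convert this using 1
  · rfl
  ring

lemma Sf_hasDerivAt_y (s : Finset ℕ) (c : ℕ → ℂ) (f g : ℕ → ℕ) (x y : ℝ) :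
    HasDerivAt (fun t : ℝ => Sf s c f g x t)
      (Sf s (fun k => c k * (f k : ℂ) * Complex.I) (fun k => f k - 1) g x y
        + Sf s (fun k => -(c k * (g k : ℂ) * Complex.I)) f (fun k => g k - 1) x y) y := by
  unfold Sf
  rw [← Finset.sum_add_distrib]
  refine HasDerivAt.fun_sum fun k _ => ?_
  have h1 := (hpow (hzy x y) (f k)).const_mul (c k)
  have h2 := hpow (hwy x y) (g k)
  have := h1.fun_mul h2
  convert this using 1
  · rfl
  ring

lemma deriv_Sf_x (s : Finset ℕ) (c : ℕ → ℂ) (f g : ℕ → ℕ) (x y : ℝ) :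
    deriv (fun t : ℝ => Sf s c f g t y) x
      = Sf s (fun k => c k * (f k : ℂ)) (fun k => f k - 1) g x y
        + Sf s (fun k => c k * (g k : ℂ)) f (fun k => g k - 1) x y :=
  (Sf_hasDerivAt_x s c f g x y).deriv

lemma deriv_Sf_y (s : Finset ℕ) (c : ℕ → ℂ) (f g : ℕ → ℕ) (x y : ℝ) :
    deriv (fun t : ℝ => Sf s c f g x t) y
      = Sf s (fun k => c k * (f k : ℂ) * Complex.I) (fun k => f k - 1) g x y
        + Sf s (fun k => -(c k * (g k : ℂ) * Complex.I)) f (fun k => g k - 1) x y :=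
  (Sf_hasDerivAt_y s c f g x y).deriv

lemma deriv_Sf2_x (s : Finset ℕ) (c1 : ℕ → ℂ) (f1 g1 : ℕ → ℕ) (c2 : ℕ → ℂ)
    (f2 g2 : ℕ → ℕ) (x y : ℝ) :
    deriv (fun t : ℝ => Sf s c1 f1 g1 t y + Sf s c2 f2 g2 t y) x
      = (Sf s (fun k => c1 k * (f1 k : ℂ)) (fun k => f1 k - 1) g1 x y
          + Sf s (fun k => c1 k * (g1 k : ℂ)) f1 (fun k => g1 k - 1) x y)
        + (Sf s (fun k => c2 k * (f2 k : ℂ)) (fun k => f2 k - 1) g2 x y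
          + Sf s (fun k => c2 k * (g2 k : ℂ)) f2 (fun k => g2 k - 1) x y) :=
  ((Sf_hasDerivAt_x s c1 f1 g1 x y).add (Sf_hasDerivAt_x s c2 f2 g2 x y)).deriv

lemma deriv_Sf2_y (s : Finset ℕ) (c1 : ℕ → ℂ) (f1 g1 : ℕ → ℕ) (c2 : ℕ → ℂ)
    (f2 g2 : ℕ → ℕ) (x y : ℝ) :
    deriv (fun t : ℝ => Sf s c1 f1 g1 x t + Sf s c2 f2 g2 x t) y
      = (Sf s (fun k => c1 k * (f1 k : ℂ) * Complex.I) (fun k => f1 k - 1) g1 x y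
          + Sf s (fun k => -(c1 k * (g1 k : ℂ) * Complex.I)) f1 (fun k => g1 k - 1) x y)
        + (Sf s (fun k => c2 k * (f2 k : ℂ) * Complex.I) (fun k => f2 k - 1) g2 x y
          + Sf s (fun k => -(c2 k * (g2 k : ℂ) * Complex.I)) f2 (fun k => g2 k - 1) x y) :=
  ((Sf_hasDerivAt_y s c1 f1 g1 x y).add (Sf_hasDerivAt_y s c2 f2 g2 x y)).deriv

/-- the coefficients of the Hermite–Laguerre–Ito polynomial. -/
def cc (m n : ℕ) (ρ : ℝ) (k : ℕ) : ℂ :=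
  (-1:ℂ)^k * (k.factorial : ℂ) * (m.choose k : ℂ) * (n.choose k : ℂ) * (ρ:ℂ)^k

/-- the Hermite–Laguerre–Ito polynomials are eigenfunctions of the
normal Ornstein–Uhlenbeck operator, with eigenvalue −(m+n)r − i(m−n)Ω, where
ρ = 2σ²/r. -/
theorem stmt3 (r Ω σ2 : ℝ) (hr : 0 < r) (hσ : 0 < σ2) (m n : ℕ) (p : ℝ × ℝ) :
    OUop r Ω σ2 (F (2 * σ2 / r) m n) p =
      (-(((m : ℝ) + n) * r : ℝ) - Complex.I * (((m : ℝ) - n) * Ω : ℝ)) *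
        F (2 * σ2 / r) m n p := by
  obtain ⟨x, y⟩ := p
  have hrne : (r:ℝ) ≠ 0 := hr.ne'
  have ha : ((-(r:ℂ))*x + (Ω:ℂ)*y) + ((-(Ω:ℂ))*x - (r:ℂ)*y)*Complex.I
      = -(((r:ℂ) + Complex.I*(Ω:ℂ)) * ((x:ℂ) + (y:ℂ)*Complex.I)) := by
    linear_combination ((Ω:ℂ)*(y:ℂ)) * Complex.I_sq
  have hb : ((-(r:ℂ))*x + (Ω:ℂ)*y) - ((-(Ω:ℂ))*x - (r:ℂ)*y)*Complex.I
      = ((-(r:ℂ)) + Complex.I*(Ω:ℂ)) * ((x:ℂ) - (y:ℂ)*Complex.I) := by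
    linear_combination ((Ω:ℂ)*(y:ℂ)) * Complex.I_sq
  have hF' : ∀ a b : ℝ, F (2*σ2/r) m n (a, b)
      = Sf (Finset.range (min m n + 1)) (cc m n (2*σ2/r))
          (fun k => m - k) (fun k => n - k) a b := by
    intro a b
    unfold F HLI Sf cc
    dsimp only
    refine Finset.sum_congr rfl fun k _ => ?_
    have hconj : (starRingEnd ℂ) ((a:ℂ) + (b:ℂ) * Complex.I) = (a:ℂ) - (b:ℂ)*Complex.I := by
      rw [map_add, map_mul, Complex.conj_ofReal, Complex.conj_ofReal, Complex.conj_I]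
      ring
    rw [hconj]
    ring
  have hrc : (r:ℂ) ≠ 0 := by exact_mod_cast hrne
  have hρr : ((2*σ2/r : ℝ):ℂ) * (r:ℂ) = 2*(σ2:ℂ) := by
    push_cast
    field_simp
  -- the key scalar recursion between consecutive coefficients
  have hkey : ∀ k : ℕ, k < min m n →
      2*((k:ℂ)+1)*(r:ℂ) * cc m n (2*σ2/r) (k+1)
        + 4*(σ2:ℂ)*((m-k:ℕ):ℂ)*((n-k:ℕ):ℂ) * cc m n (2*σ2/r) k = 0 := by
    intro k hk
    have h1 : ((m.choose (k+1) : ℕ):ℂ) * ((k:ℂ)+1)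
        = ((m.choose k : ℕ):ℂ) * ((m - k : ℕ):ℂ) := by
      exact_mod_cast congrArg (Nat.cast (R := ℂ)) (Nat.choose_succ_right_eq m k)
    have h2 : ((n.choose (k+1) : ℕ):ℂ) * ((k:ℂ)+1)
        = ((n.choose k : ℕ):ℂ) * ((n - k : ℕ):ℂ) := by
      exact_mod_cast congrArg (Nat.cast (R := ℂ)) (Nat.choose_succ_right_eq n k)
    unfold cc
    generalize hP : ((2*σ2/r:ℝ):ℂ) = P at hρr ⊢
    push_cast [pow_succ, Nat.factorial_succ]
    linear_combination
      (-2*(r:ℂ)*(-1:ℂ)^k*(k.factorial:ℂ)*P^k*P*((k:ℂ)+1)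
        *((n.choose (k+1) : ℕ):ℂ)) * h1
      + (-2*(r:ℂ)*(-1:ℂ)^k*(k.factorial:ℂ)*P^k*P
        *((m.choose k : ℕ):ℂ)*((m-k:ℕ):ℂ)) * h2
      + (-2*(-1:ℂ)^k*(k.factorial:ℂ)*P^k*((m.choose k : ℕ):ℂ)
        *((n.choose k : ℕ):ℂ)*((m-k:ℕ):ℂ)*((n-k:ℕ):ℂ)) * hρr
  -- the sum of the residual terms vanishes by telescoping
  have hfinal : ∑ k ∈ Finset.range (min m n + 1),
      ( 2*(k:ℂ)*(r:ℂ) * cc m n (2*σ2/r) k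
          * ((x:ℂ)+(y:ℂ)*Complex.I)^(m-k) * ((x:ℂ)-(y:ℂ)*Complex.I)^(n-k)
        + 4*(σ2:ℂ)*((m-k:ℕ):ℂ)*((n-k:ℕ):ℂ) * cc m n (2*σ2/r) k
          * ((x:ℂ)+(y:ℂ)*Complex.I)^(m-k-1) * ((x:ℂ)-(y:ℂ)*Complex.I)^(n-k-1) ) = 0 := by
    rw [Finset.sum_add_distrib, Finset.sum_range_succ' _ (min m n),
      Finset.sum_range_succ _ (min m n)]
    have hB0 : (2*((0:ℕ):ℂ)*(r:ℂ) * cc m n (2*σ2/r) 0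
        * ((x:ℂ)+(y:ℂ)*Complex.I)^(m-0) * ((x:ℂ)-(y:ℂ)*Complex.I)^(n-0)) = 0 := by
      simp
    have hBN : (4*(σ2:ℂ)*((m-min m n:ℕ):ℂ)*((n-min m n:ℕ):ℂ) * cc m n (2*σ2/r) (min m n)
        * ((x:ℂ)+(y:ℂ)*Complex.I)^(m-min m n-1) * ((x:ℂ)-(y:ℂ)*Complex.I)^(n-min m n-1)) = 0 := by
      obtain h | h : m - min m n = 0 ∨ n - min m n = 0 := by omega
      · rw [h]; simp
      · rw [h]; simp
    rw [hB0, hBN, add_zero, add_zero, ← Finset.sum_add_distrib]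
    refine Finset.sum_eq_zero fun k hk => ?_
    have hk' : k < min m n := Finset.mem_range.mp hk
    have hsc := hkey k hk'
    have em : m - (k+1) = m - k - 1 := by omega
    have en : n - (k+1) = n - k - 1 := by omega
    rw [em, en]
    push_cast
    linear_combination
      (((x:ℂ)+(y:ℂ)*Complex.I)^(m-k-1) * ((x:ℂ)-(y:ℂ)*Complex.I)^(n-k-1)) * hsc
  -- now rewrite the operator application into `Sf` form
  simp only [OUop, pdx, pdy]
  simp only [hF']
  simp only [deriv_Sf_x, deriv_Sf_y, deriv_Sf2_x, deriv_Sf2_y]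
  rw [← sub_eq_zero]
  simp only [Sf, mul_add, Finset.mul_sum, ← Finset.sum_add_distrib, ← Finset.sum_sub_distrib]
  refine Eq.trans (Finset.sum_congr rfl fun k hk => ?_) hfinal
  have hkN : k < min m n + 1 := Finset.mem_range.mp hk
  have hm : k ≤ m := by omega
  have hn : k ≤ n := by omega
  rcases Nat.lt_or_ge k m with hm' | hm'
  · obtain ⟨j, hj⟩ : ∃ j, m - k = j + 1 := ⟨m - k - 1, by omega⟩
    have hmc : (m:ℂ) = (k:ℂ) + (j:ℂ) + 1 := by
      have h' : m = k + j + 1 := by omega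
      rw [h']; push_cast; ring
    rcases Nat.lt_or_ge k n with hn' | hn'
    · obtain ⟨i, hi⟩ : ∃ i, n - k = i + 1 := ⟨n - k - 1, by omega⟩
      have hnc : (n:ℂ) = (k:ℂ) + (i:ℂ) + 1 := by
        have h' : n = k + i + 1 := by omega
        rw [h']; push_cast; ring
      rw [hj, hi]
      simp only [Nat.add_sub_cancel]
      push_cast
      rw [hmc, hnc]
      linear_combination
        (cc m n (2*σ2/r) k * ((j:ℂ)+1) * ((x:ℂ)+(y:ℂ)*Complex.I)^j
          * ((x:ℂ)-(y:ℂ)*Complex.I)^(i+1)) * ha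
        + (cc m n (2*σ2/r) k * ((i:ℂ)+1) * ((x:ℂ)+(y:ℂ)*Complex.I)^(j+1)
          * ((x:ℂ)-(y:ℂ)*Complex.I)^i) * hb
        + ((σ2:ℂ) * ( cc m n (2*σ2/r) k * ((j:ℂ)+1)*(j:ℂ)
              * ((x:ℂ)+(y:ℂ)*Complex.I)^(j-1) * ((x:ℂ)-(y:ℂ)*Complex.I)^(i+1)
            - 2*cc m n (2*σ2/r) k*((j:ℂ)+1)*((i:ℂ)+1)
              * ((x:ℂ)+(y:ℂ)*Complex.I)^j * ((x:ℂ)-(y:ℂ)*Complex.I)^i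
            + cc m n (2*σ2/r) k*((i:ℂ)+1)*(i:ℂ)
              * ((x:ℂ)+(y:ℂ)*Complex.I)^(j+1) * ((x:ℂ)-(y:ℂ)*Complex.I)^(i-1))) * Complex.I_sq
    · -- k = n < m
      have hn0 : n - k = 0 := by omega
      have hnc : (n:ℂ) = (k:ℂ) := by
        have h' : n = k := by omega
        rw [h']
      rw [hj, hn0]
      simp only [Nat.add_sub_cancel, Nat.zero_sub, pow_zero, Nat.cast_zero]
      push_cast
      rw [hmc, hnc]
      linear_combination
        (cc m n (2*σ2/r) k * ((j:ℂ)+1) * ((x:ℂ)+(y:ℂ)*Complex.I)^j) * ha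
        + ((σ2:ℂ) * cc m n (2*σ2/r) k * ((j:ℂ)+1)*(j:ℂ)
            * ((x:ℂ)+(y:ℂ)*Complex.I)^(j-1)) * Complex.I_sq
  · -- k = m
    have hm0 : m - k = 0 := by omega
    have hmc : (m:ℂ) = (k:ℂ) := by
      have h' : m = k := by omega
      rw [h']
    rcases Nat.lt_or_ge k n with hn' | hn'
    · obtain ⟨i, hi⟩ : ∃ i, n - k = i + 1 := ⟨n - k - 1, by omega⟩
      have hnc : (n:ℂ) = (k:ℂ) + (i:ℂ) + 1 := by
        have h' : n = k + i + 1 := by omega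
        rw [h']; push_cast; ring
      rw [hm0, hi]
      simp only [Nat.add_sub_cancel, Nat.zero_sub, pow_zero, Nat.cast_zero]
      push_cast
      rw [hmc, hnc]
      linear_combination
        (cc m n (2*σ2/r) k * ((i:ℂ)+1) * ((x:ℂ)-(y:ℂ)*Complex.I)^i) * hb
        + ((σ2:ℂ) * cc m n (2*σ2/r) k * ((i:ℂ)+1)*(i:ℂ)
            * ((x:ℂ)-(y:ℂ)*Complex.I)^(i-1)) * Complex.I_sq
    · -- k = m and k = n
      have hn0 : n - k = 0 := by omega
      have hnc : (n:ℂ) = (k:ℂ) := by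
        have h' : n = k := by omega
        rw [h']
      rw [hm0, hn0]
      simp only [Nat.zero_sub, pow_zero, Nat.cast_zero]
      push_cast
      rw [hmc, hnc]
      ring

end
end

section
/- For every c ∈ ℝ, m, n ∈ ℕ and ρ > 0, the identity (1+ic) · z · (∂F_{m,n})(x,y) + (1−ic) · conj(z) · (∂̄F_{m,n})(x,y) − 2ρ · (∂∂̄F_{m,n})(x,y) = (m + n + i(m−n)c) · F_{m,n}(x,y) holds for all (x,y) ∈ ℝ², where z = x + iy. -/
open MeasureTheory Complex Finset

noncomputable section

def Gf (a b : ℕ) (p : ℝ × ℝ) : ℂ := ((p.1:ℂ) + p.2*Complex.I)^a * ((p.1:ℂ) - p.2*Complex.I)^b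

lemma hx (w : ℂ) (x : ℝ) : HasDerivAt (fun x:ℝ => ((x:ℂ) + w)) 1 x := by
  simpa using (Complex.ofRealCLM.hasDerivAt (x := x)).add_const w

lemma hy (v e : ℂ) (t : ℝ) : HasDerivAt (fun t:ℝ => (v + (t:ℂ)*e)) e t := by
  simpa using ((Complex.ofRealCLM.hasDerivAt (x := t)).mul_const e).const_add v

lemma hpowx (w : ℂ) (a : ℕ) (x : ℝ) :
    HasDerivAt (fun t:ℝ => ((t:ℂ)+w)^a) ((a:ℂ) * ((x:ℂ)+w)^(a-1)) x := by
  have := (hasDerivAt_pow a ((x:ℂ)+w)).comp x (hx w x)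
  simp only [mul_one] at this; exact this

lemma hpowy (v e : ℂ) (a : ℕ) (t : ℝ) :
    HasDerivAt (fun t:ℝ => (v + (t:ℂ)*e)^a) ((a:ℂ) * (v + (t:ℂ)*e)^(a-1) * e) t := by
  exact (hasDerivAt_pow a (v + (t:ℂ)*e)).comp t (hy v e t)

lemma hGx (a b : ℕ) (x y : ℝ) :
    HasDerivAt (fun t:ℝ => Gf a b (t, y))
      ((a:ℂ) * Gf (a-1) b (x,y) + (b:ℂ) * Gf a (b-1) (x,y)) x := by
  have h1 := (hpowx ((y:ℂ)*Complex.I) a x).mul (hpowx (-((y:ℂ)*Complex.I)) b x)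
  have e : (fun t:ℝ => Gf a b (t, y))
      = fun t:ℝ => ((t:ℂ)+(y:ℂ)*Complex.I)^a * ((t:ℂ)+ -((y:ℂ)*Complex.I))^b := by
    funext t; simp only [Gf]; ring
  rw [e]; exact h1.congr_deriv (by simp only [Gf]; ring)

lemma hGy (a b : ℕ) (x y : ℝ) :
    HasDerivAt (fun t:ℝ => Gf a b (x, t))
      (Complex.I * ((a:ℂ) * Gf (a-1) b (x,y) - (b:ℂ) * Gf a (b-1) (x,y))) y := by
  have h1 := (hpowy (x:ℂ) Complex.I a y).mul (hpowy (x:ℂ) (-Complex.I) b y)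
  have e : (fun t:ℝ => Gf a b (x, t))
      = fun t:ℝ => ((x:ℂ)+(t:ℂ)*Complex.I)^a * ((x:ℂ)+(t:ℂ)*(-Complex.I))^b := by
    funext t; simp only [Gf]; ring
  rw [e]; exact h1.congr_deriv (by simp only [Gf]; ring)

variable {ι : Type*}

lemma pdx_sum (s : Finset ι) (cf : ι → ℂ) (af bf : ι → ℕ) (p : ℝ × ℝ) :
    pdx (fun q => ∑ r ∈ s, cf r * Gf (af r) (bf r) q) p
      = ∑ r ∈ s, cf r * ((af r : ℂ) * Gf (af r - 1) (bf r) p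
          + (bf r : ℂ) * Gf (af r) (bf r - 1) p) := by
  have h : HasDerivAt (fun x : ℝ => ∑ r ∈ s, cf r * Gf (af r) (bf r) (x, p.2))
      (∑ r ∈ s, cf r * ((af r : ℂ) * Gf (af r - 1) (bf r) (p.1, p.2)
          + (bf r : ℂ) * Gf (af r) (bf r - 1) (p.1, p.2))) p.1 :=
    HasDerivAt.fun_sum fun r _ => (hGx (af r) (bf r) p.1 p.2).const_mul (cf r)
  simpa [pdx] using h.deriv

lemma pdy_sum (s : Finset ι) (cf : ι → ℂ) (af bf : ι → ℕ) (p : ℝ × ℝ) :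
    pdy (fun q => ∑ r ∈ s, cf r * Gf (af r) (bf r) q) p
      = ∑ r ∈ s, cf r * (Complex.I * ((af r : ℂ) * Gf (af r - 1) (bf r) p
          - (bf r : ℂ) * Gf (af r) (bf r - 1) p)) := by
  have h : HasDerivAt (fun y : ℝ => ∑ r ∈ s, cf r * Gf (af r) (bf r) (p.1, y))
      (∑ r ∈ s, cf r * (Complex.I * ((af r : ℂ) * Gf (af r - 1) (bf r) (p.1, p.2)
          - (bf r : ℂ) * Gf (af r) (bf r - 1) (p.1, p.2)))) p.2 :=
    HasDerivAt.fun_sum fun r _ => (hGy (af r) (bf r) p.1 p.2).const_mul (cf r)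
  simpa [pdy] using h.deriv

lemma wd_sum (s : Finset ι) (cf : ι → ℂ) (af bf : ι → ℕ) (p : ℝ × ℝ) :
    wd (fun q => ∑ r ∈ s, cf r * Gf (af r) (bf r) q) p
      = ∑ r ∈ s, cf r * (af r : ℂ) * Gf (af r - 1) (bf r) p := by
  rw [wd, pdx_sum, pdy_sum, Finset.mul_sum, ← Finset.sum_sub_distrib, Finset.mul_sum]
  refine Finset.sum_congr rfl fun r _ => ?_
  linear_combination ((cf r) * ((bf r : ℂ) * Gf (af r) (bf r - 1) p
      - (af r : ℂ) * Gf (af r - 1) (bf r) p) / 2) * Complex.I_sq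

lemma wdb_sum (s : Finset ι) (cf : ι → ℂ) (af bf : ι → ℕ) (p : ℝ × ℝ) :
    wdb (fun q => ∑ r ∈ s, cf r * Gf (af r) (bf r) q) p
      = ∑ r ∈ s, cf r * (bf r : ℂ) * Gf (af r) (bf r - 1) p := by
  rw [wdb, pdx_sum, pdy_sum, Finset.mul_sum, ← Finset.sum_add_distrib, Finset.mul_sum]
  refine Finset.sum_congr rfl fun r _ => ?_
  linear_combination ((cf r) * ((af r : ℂ) * Gf (af r - 1) (bf r) p
      - (bf r : ℂ) * Gf (af r) (bf r - 1) p) / 2) * Complex.I_sq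

def Acoef (m n : ℕ) (ρ : ℝ) (r : ℕ) : ℂ :=
  (-1:ℂ)^r * (r.factorial : ℂ) * (m.choose r : ℂ) * (n.choose r : ℂ) * (ρ:ℂ)^r

lemma conj_z (p : ℝ × ℝ) :
    starRingEnd ℂ ((p.1:ℂ) + p.2*Complex.I) = (p.1:ℂ) - p.2*Complex.I := by
  simp [map_add, map_mul, Complex.conj_ofReal, Complex.conj_I]
  ring

lemma F_eq (ρ : ℝ) (m n : ℕ) :
    F ρ m n = fun p => ∑ r ∈ Finset.range (min m n + 1),
      Acoef m n ρ r * Gf (m - r) (n - r) p := by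
  funext p
  simp only [F, HLI, Acoef, Gf, conj_z]
  refine Finset.sum_congr rfl fun r _ => ?_
  ring

lemma wd_F (ρ : ℝ) (m n : ℕ) (p : ℝ × ℝ) :
    wd (F ρ m n) p = ∑ r ∈ Finset.range (min m n + 1),
      Acoef m n ρ r * ((m - r : ℕ) : ℂ) * Gf (m - r - 1) (n - r) p := by
  rw [F_eq]; exact wd_sum _ _ _ _ p

lemma wdb_F (ρ : ℝ) (m n : ℕ) (p : ℝ × ℝ) :
    wdb (F ρ m n) p = ∑ r ∈ Finset.range (min m n + 1),
      (Acoef m n ρ r * ((n - r : ℕ) : ℂ)) * Gf (m - r) (n - r - 1) p := by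
  rw [F_eq]
  have := wdb_sum (Finset.range (min m n + 1)) (fun r => Acoef m n ρ r)
    (fun r => m - r) (fun r => n - r) p
  simpa using this

lemma wdwdb_F (ρ : ℝ) (m n : ℕ) (p : ℝ × ℝ) :
    wd (fun q => wdb (F ρ m n) q) p = ∑ r ∈ Finset.range (min m n + 1),
      (Acoef m n ρ r * ((n - r : ℕ) : ℂ)) * ((m - r : ℕ) : ℂ)
        * Gf (m - r - 1) (n - r - 1) p := by
  have hfun : (fun q => wdb (F ρ m n) q) = fun q => ∑ r ∈ Finset.range (min m n + 1),
      (Acoef m n ρ r * ((n - r : ℕ) : ℂ)) * Gf (m - r) (n - r - 1) q :=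
    funext fun q => wdb_F ρ m n q
  rw [hfun]
  have := wd_sum (Finset.range (min m n + 1))
    (fun r => Acoef m n ρ r * ((n - r : ℕ) : ℂ))
    (fun r => m - r) (fun r => n - r - 1) p
  simpa using this

lemma tstep (m n : ℕ) (ρ : ℝ) (p : ℝ × ℝ) (r : ℕ) :
    2*(ρ:ℂ) * ((Acoef m n ρ r * ((n - r : ℕ) : ℂ)) * ((m - r : ℕ) : ℂ)
        * Gf (m - r - 1) (n - r - 1) p)
      = (-(2*((r+1 : ℕ):ℂ))) * (Acoef m n ρ (r+1) * Gf (m - (r+1)) (n - (r+1)) p) := by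
  have h1 : (m.choose (r+1)) * (r+1) = (m.choose r) * (m - r) := Nat.choose_succ_right_eq m r
  have h2 : (n.choose (r+1)) * (r+1) = (n.choose r) * (n - r) := Nat.choose_succ_right_eq n r
  have e1 : ((m.choose r : ℂ) * ((m - r : ℕ) : ℂ)) * ((n.choose r : ℂ) * ((n - r : ℕ) : ℂ))
      = ((m.choose (r+1) : ℂ) * ((r:ℂ)+1)) * ((n.choose (r+1) : ℂ) * ((r:ℂ)+1)) := by
    have : (m.choose r * (m - r)) * (n.choose r * (n - r))
        = (m.choose (r+1) * (r+1)) * (n.choose (r+1) * (r+1)) := by rw [h1, h2]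
    exact_mod_cast this
  have hsub1 : m - (r+1) = m - r - 1 := (Nat.sub_sub m r 1).symm
  have hsub2 : n - (r+1) = n - r - 1 := (Nat.sub_sub n r 1).symm
  rw [hsub1, hsub2]
  simp only [Acoef]
  push_cast [Nat.factorial_succ, pow_succ]
  linear_combination (2*(-1:ℂ)^r*(r.factorial:ℂ)*(ρ:ℂ)^r*(ρ:ℂ)*Gf (m-r-1) (n-r-1) p) * e1

lemma shift (m n : ℕ) (ρ : ℝ) (p : ℝ × ℝ) :
    ∑ r ∈ Finset.range (min m n + 1), 2*(ρ:ℂ) * ((Acoef m n ρ r * ((n - r : ℕ) : ℂ))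
        * ((m - r : ℕ) : ℂ) * Gf (m - r - 1) (n - r - 1) p)
      = ∑ r ∈ Finset.range (min m n + 1),
        (-(2*(r:ℂ))) * (Acoef m n ρ r * Gf (m - r) (n - r) p) := by
  set M := min m n with hM
  set v : ℕ → ℂ := fun s => (-(2*(s:ℂ))) * (Acoef m n ρ s * Gf (m - s) (n - s) p) with hv
  have step1 : ∑ r ∈ Finset.range (M + 1), 2*(ρ:ℂ) * ((Acoef m n ρ r * ((n - r : ℕ) : ℂ))
        * ((m - r : ℕ) : ℂ) * Gf (m - r - 1) (n - r - 1) p)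
      = ∑ r ∈ Finset.range (M + 1), v (r+1) :=
    Finset.sum_congr rfl fun r _ => by simpa [hv] using tstep m n ρ p r
  have hA : Acoef m n ρ (M+1) = 0 := by
    rcases le_total m n with h | h
    · have : m.choose (M+1) = 0 := Nat.choose_eq_zero_of_lt (by omega)
      simp [Acoef, this]
    · have : n.choose (M+1) = 0 := Nat.choose_eq_zero_of_lt (by omega)
      simp [Acoef, this]
  have hv0 : v 0 = 0 := by simp [hv]
  have hvM : v (M+1) = 0 := by simp [hv, hA]
  have e1 := Finset.sum_range_succ' v (M+1)
  have e2 := Finset.sum_range_succ v (M+1)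
  rw [step1]
  rw [e2] at e1
  linear_combination hvM - hv0 - e1

lemma zmul (a b : ℕ) (p : ℝ × ℝ) :
    (a:ℂ) * (((p.1:ℂ) + p.2*Complex.I) * Gf (a-1) b p) = (a:ℂ) * Gf a b p := by
  cases a with
  | zero => simp
  | succ k =>
    simp only [Nat.succ_sub_one, Gf]
    push_cast
    ring

lemma zbmul (a b : ℕ) (p : ℝ × ℝ) :
    (b:ℂ) * (((p.1:ℂ) - p.2*Complex.I) * Gf a (b-1) p) = (b:ℂ) * Gf a b p := by
  cases b with
  | zero => simp
  | succ k =>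
    simp only [Nat.succ_sub_one, Gf]
    push_cast
    ring

/-- the eigenfunction identity
`(1+ic) z ∂F + (1−ic) z̄ ∂̄F − 2ρ ∂∂̄F = (m+n+i(m−n)c) F`. -/
theorem stmt4 (c : ℝ) (m n : ℕ) (ρ : ℝ) (hρ : 0 < ρ) (p : ℝ × ℝ) :
    (1 + Complex.I * c) * (p.1 + p.2 * Complex.I) * wd (F ρ m n) p +
      (1 - Complex.I * c) * (starRingEnd ℂ (p.1 + p.2 * Complex.I)) * wdb (F ρ m n) p -
      2 * (ρ : ℂ) * wd (fun q => wdb (F ρ m n) q) p =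
      (((m : ℂ) + n) + Complex.I * ((m : ℂ) - n) * c) * F ρ m n p := by
  rw [wd_F, wdb_F, wdwdb_F, F_eq, conj_z]
  rw [Finset.mul_sum, Finset.mul_sum, Finset.mul_sum, shift, Finset.mul_sum,
    ← Finset.sum_add_distrib, ← Finset.sum_sub_distrib]
  refine Finset.sum_congr rfl fun r hr => ?_
  have hrm : r ≤ m := le_trans (Nat.lt_succ_iff.mp (Finset.mem_range.mp hr)) (min_le_left m n)
  have hrn : r ≤ n := le_trans (Nat.lt_succ_iff.mp (Finset.mem_range.mp hr)) (min_le_right m n)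
  have hz := zmul (m - r) (n - r) p
  have hzb := zbmul (m - r) (n - r) p
  have hm : ((m - r : ℕ) : ℂ) = (m:ℂ) - r := by push_cast [hrm]; ring
  have hn : ((n - r : ℕ) : ℂ) = (n:ℂ) - r := by push_cast [hrn]; ring
  linear_combination (1 + Complex.I*c) * (Acoef m n ρ r) * hz
    + (1 - Complex.I*c) * (Acoef m n ρ r) * hzb
    + ((1 + Complex.I*c) * (Acoef m n ρ r) * Gf (m-r) (n-r) p) * hm
    + ((1 - Complex.I*c) * (Acoef m n ρ r) * Gf (m-r) (n-r) p) * hn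


end
end

section
/- For all λ, z ∈ ℂ and ρ > 0, the family ( conj(λ)^m · λ^n / (m! · n!) · J_{m,n}(z,ρ) ) indexed by (m,n) ∈ ℕ × ℕ is summable, with sum exp(λ · conj(z) + conj(λ) · z − ρ |λ|²). -/
open MeasureTheory Complex Finset

noncomputable section

lemma exp_hasSum (a : ℂ) : HasSum (fun n : ℕ => a ^ n / n.factorial) (Complex.exp a) := by
  rw [Complex.exp_eq_exp_ℂ]
  exact NormedSpace.expSeries_div_hasSum_exp a

lemma exp_summable_norm (a : ℂ) : Summable (fun n : ℕ => ‖a ^ n / n.factorial‖) := by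
  have := Real.summable_pow_div_factorial ‖a‖
  refine this.congr fun n => ?_
  simp [norm_div, norm_pow]

lemma choose_cast_eq (i r : ℕ) :
    (((i + r).choose r : ℂ)) * (r.factorial : ℂ) * (i.factorial : ℂ) = ((i + r).factorial : ℂ) := by
  have h := Nat.choose_mul_factorial_mul_factorial (Nat.le_add_left r i)
  rw [Nat.add_sub_cancel] at h
  exact_mod_cast congrArg (Nat.cast : ℕ → ℂ) h

set_option maxHeartbeats 2000000 in
/-- generating function of the Hermite–Laguerre–Ito polynomials:
the family `conj(λ)^m λ^n / (m! n!) · J_{m,n}(z,ρ)` is summable with sum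
`exp(λ z̄ + λ̄ z − ρ|λ|²)`. -/
theorem stmt5 (lam z : ℂ) (ρ : ℝ) (hρ : 0 < ρ) :
    HasSum
      (fun mn : ℕ × ℕ =>
        (starRingEnd ℂ lam) ^ mn.1 * lam ^ mn.2 /
          ((mn.1.factorial : ℂ) * (mn.2.factorial : ℂ)) * HLI mn.1 mn.2 z ρ)
      (Complex.exp (lam * starRingEnd ℂ z + starRingEnd ℂ lam * z -
        (ρ : ℂ) * (‖lam‖ : ℝ) ^ 2)) := by
  set a : ℂ := starRingEnd ℂ lam * z with ha
  set b : ℂ := lam * starRingEnd ℂ z with hb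
  set c : ℂ := -(ρ : ℂ) * (lam * starRingEnd ℂ lam) with hc
  have h1 := exp_hasSum a
  have h2 := exp_hasSum b
  have h3 := exp_hasSum c
  have hs12 : Summable fun p : ℕ × ℕ => (a ^ p.1 / p.1.factorial) * (b ^ p.2 / p.2.factorial) :=
    summable_mul_of_summable_norm (R := ℂ) (f := fun n : ℕ => a ^ n / n.factorial)
      (g := fun n : ℕ => b ^ n / n.factorial) (exp_summable_norm a) (exp_summable_norm b)
  have h12 : HasSum (fun p : ℕ × ℕ => (a ^ p.1 / p.1.factorial) * (b ^ p.2 / p.2.factorial))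
      (Complex.exp a * Complex.exp b) :=
    HasSum.mul (f := fun n : ℕ => a ^ n / n.factorial)
      (g := fun n : ℕ => b ^ n / n.factorial) h1 h2 hs12
  have h12norm : Summable (fun p : ℕ × ℕ =>
      ‖(a ^ p.1 / p.1.factorial) * (b ^ p.2 / p.2.factorial)‖) :=
    Summable.mul_norm (R := ℂ) (f := fun n : ℕ => a ^ n / n.factorial)
      (g := fun n : ℕ => b ^ n / n.factorial) (exp_summable_norm a) (exp_summable_norm b)
  have hs123 : Summable fun q : (ℕ × ℕ) × ℕ =>
      ((a ^ q.1.1 / q.1.1.factorial) * (b ^ q.1.2 / q.1.2.factorial)) *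
        (c ^ q.2 / q.2.factorial) :=
    summable_mul_of_summable_norm (R := ℂ)
      (f := fun p : ℕ × ℕ => (a ^ p.1 / p.1.factorial) * (b ^ p.2 / p.2.factorial))
      (g := fun n : ℕ => c ^ n / n.factorial) h12norm (exp_summable_norm c)
  have h123 : HasSum (fun q : (ℕ × ℕ) × ℕ =>
      ((a ^ q.1.1 / q.1.1.factorial) * (b ^ q.1.2 / q.1.2.factorial)) * (c ^ q.2 / q.2.factorial))
      (Complex.exp a * Complex.exp b * Complex.exp c) :=
    HasSum.mul (f := fun p : ℕ × ℕ => (a ^ p.1 / p.1.factorial) * (b ^ p.2 / p.2.factorial))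
      (g := fun n : ℕ => c ^ n / n.factorial) h12 h3 hs123
  set G : (ℕ × ℕ) × ℕ → ℂ := fun q =>
    if q.2 ≤ min q.1.1 q.1.2 then
      (starRingEnd ℂ lam) ^ q.1.1 * lam ^ q.1.2 /
        ((q.1.1.factorial : ℂ) * (q.1.2.factorial : ℂ)) *
      ((-1 : ℂ) ^ q.2 * (q.2.factorial : ℂ) * (q.1.1.choose q.2 : ℂ) * (q.1.2.choose q.2 : ℂ) *
        z ^ (q.1.1 - q.2) * (starRingEnd ℂ z) ^ (q.1.2 - q.2) * (ρ : ℂ) ^ q.2)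
    else 0 with hG
  set e : (ℕ × ℕ) × ℕ → (ℕ × ℕ) × ℕ := fun q => ((q.1.1 + q.2, q.1.2 + q.2), q.2) with he
  have einj : Function.Injective e := by
    rintro ⟨⟨i, j⟩, r⟩ ⟨⟨i', j'⟩, r'⟩ h
    simp only [he, Prod.mk.injEq] at h
    obtain ⟨⟨hx, hy⟩, hz'⟩ := h
    subst hz'
    have : i = i' := by omega
    have : j = j' := by omega
    simp_all
  have hzero : ∀ q ∉ Set.range e, G q = 0 := by
    rintro ⟨⟨m, n⟩, r⟩ hq
    by_cases hr : r ≤ min m n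
    · refine absurd ⟨((m - r, n - r), r), ?_⟩ hq
      have e1 : m - r + r = m := by omega
      have e2 : n - r + r = n := by omega
      simp [he, e1, e2]
    · simp only [hG, if_neg hr]
  have hcomp : ∀ q : (ℕ × ℕ) × ℕ, (G ∘ e) q =
      ((a ^ q.1.1 / q.1.1.factorial) * (b ^ q.1.2 / q.1.2.factorial)) *
        (c ^ q.2 / q.2.factorial) := by
    rintro ⟨⟨i, j⟩, r⟩
    have hcond : r ≤ min (i + r) (j + r) := by omega
    simp only [Function.comp, hG, he, if_pos hcond, Nat.add_sub_cancel]
    have hi := choose_cast_eq i r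
    have hj := choose_cast_eq j r
    have fi : (i.factorial : ℂ) ≠ 0 := Nat.cast_ne_zero.mpr i.factorial_ne_zero
    have fj : (j.factorial : ℂ) ≠ 0 := Nat.cast_ne_zero.mpr j.factorial_ne_zero
    have fr : (r.factorial : ℂ) ≠ 0 := Nat.cast_ne_zero.mpr r.factorial_ne_zero
    have fir : ((i + r).factorial : ℂ) ≠ 0 := Nat.cast_ne_zero.mpr (i + r).factorial_ne_zero
    have fjr : ((j + r).factorial : ℂ) ≠ 0 := Nat.cast_ne_zero.mpr (j + r).factorial_ne_zero
    rw [ha, hb, hc]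
    field_simp
    rw [← hi, ← hj]
    ring
  have hGe : HasSum (G ∘ e) (Complex.exp a * Complex.exp b * Complex.exp c) := by
    rw [funext hcomp]; exact h123
  have hGsum : HasSum G (Complex.exp a * Complex.exp b * Complex.exp c) :=
    (einj.hasSum_iff hzero).mp hGe
  have hfiber : ∀ mn : ℕ × ℕ, HasSum (fun r => G (mn, r))
      ((starRingEnd ℂ lam) ^ mn.1 * lam ^ mn.2 /
          ((mn.1.factorial : ℂ) * (mn.2.factorial : ℂ)) * HLI mn.1 mn.2 z ρ) := by
    rintro ⟨m, n⟩
    have hv : ∀ r ∉ Finset.range (min m n + 1), G ((m, n), r) = 0 := by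
      intro r hr
      simp only [Finset.mem_range] at hr
      simp only [hG, if_neg (by omega : ¬ r ≤ min m n)]
    have := hasSum_sum_of_ne_finset_zero (f := fun r => G ((m, n), r)) (L := SummationFilter.unconditional ℕ) hv
    convert this using 1
    rw [HLI, Finset.mul_sum]
    refine Finset.sum_congr rfl fun r hr => ?_
    simp only [Finset.mem_range] at hr
    simp only [hG, if_pos (by omega : r ≤ min m n)]
  have key := hGsum.prod_fiberwise hfiber
  convert key using 1
  rw [← Complex.exp_add, ← Complex.exp_add]
  congr 1
  have habs : ((‖lam‖ : ℂ)) ^ 2 = ((Complex.normSq lam : ℝ) : ℂ) := by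
    rw [← Complex.ofReal_pow, Complex.sq_norm]
  rw [habs, ← Complex.mul_conj, ha, hb, hc]
  ring

end
end

section
/- Let r > 0, σ² > 0 and Ω ∈ ℝ. For every polynomial function p : ℝ² → ℂ (a polynomial in x and y with complex coefficients), A(A* p) = A*(A p) pointwise on ℝ²; that is, the normal Ornstein–Uhlenbeck operator A commutes with its formal adjoint A* on polynomials. -/
open MeasureTheory Complex Finset

noncomputable section

/-- the formal adjoint of `OUop` in L² of the invariant Gaussian measure:
`A* f = (−rx−Ωy) ∂f/∂x + (Ωx−ry) ∂f/∂y + σ² Δf`. -/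
def OUopStar (r Ω σ2 : ℝ) (f : ℝ × ℝ → ℂ) (p : ℝ × ℝ) : ℂ :=
  ((-r * p.1 - Ω * p.2 : ℝ) : ℂ) * pdx f p + ((Ω * p.1 - r * p.2 : ℝ) : ℂ) * pdy f p +
    (σ2 : ℂ) * (pdx (fun q => pdx f q) p + pdy (fun q => pdy f q) p)

/-- evaluation of a complex polynomial in two variables at a point of ℝ². -/
def polyEval (P : MvPolynomial (Fin 2) ℂ) (p : ℝ × ℝ) : ℂ :=
  MvPolynomial.eval ![(p.1 : ℂ), (p.2 : ℂ)] P

open MvPolynomial in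
lemma pderiv_swap (Q : MvPolynomial (Fin 2) ℂ) :
    pderiv 1 (pderiv 0 Q) = pderiv 0 (pderiv 1 Q) := by
  induction Q using MvPolynomial.induction_on with
  | C a => simp
  | add p q hp hq => simp [hp, hq]
  | mul_X p k hp =>
      simp only [pderiv_mul, pderiv_X, map_add, hp, Pi.single_apply]
      split_ifs <;> simp <;> ring

open MvPolynomial in
lemma key0 (P : MvPolynomial (Fin 2) ℂ) (y : ℂ) (x : ℝ) :
    HasDerivAt (fun t : ℝ => MvPolynomial.eval ![(t:ℂ), y] P)
      (MvPolynomial.eval ![(x:ℂ), y] (pderiv 0 P)) x := by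
  induction P using MvPolynomial.induction_on with
  | C a => simpa using hasDerivAt_const x (a : ℂ)
  | add p q hp hq => have h := hp.add hq; simp only [map_add] at h ⊢; exact h
  | mul_X p k hp =>
      have hX : HasDerivAt (fun t : ℝ => MvPolynomial.eval ![(t:ℂ), y] (X k))
          (MvPolynomial.eval ![(x:ℂ), y] (pderiv 0 (X k))) x := by
        fin_cases k
        · have h := Complex.ofRealCLM.hasDerivAt (x := x); simp at h ⊢; exact h
        · simpa [pderiv_X_of_ne] using hasDerivAt_const x y
      have h := hp.mul hX
      have e : (fun t : ℝ => MvPolynomial.eval ![(t:ℂ), y] (p * X k)) =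
          fun t : ℝ => MvPolynomial.eval ![(t:ℂ), y] p * MvPolynomial.eval ![(t:ℂ), y] (X k) := by
        funext t; rw [map_mul]
      rw [e, pderiv_mul, map_add, map_mul, map_mul]
      exact h

open MvPolynomial in
lemma key1 (P : MvPolynomial (Fin 2) ℂ) (x : ℂ) (y : ℝ) :
    HasDerivAt (fun t : ℝ => MvPolynomial.eval ![x, (t:ℂ)] P)
      (MvPolynomial.eval ![x, (y:ℂ)] (pderiv 1 P)) y := by
  induction P using MvPolynomial.induction_on with
  | C a => simpa using hasDerivAt_const y (a : ℂ)
  | add p q hp hq => have h := hp.add hq; simp only [map_add] at h ⊢; exact h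
  | mul_X p k hp =>
      have hX : HasDerivAt (fun t : ℝ => MvPolynomial.eval ![x, (t:ℂ)] (X k))
          (MvPolynomial.eval ![x, (y:ℂ)] (pderiv 1 (X k))) y := by
        fin_cases k
        · simpa [pderiv_X_of_ne] using hasDerivAt_const y x
        · have h := Complex.ofRealCLM.hasDerivAt (x := y); simp at h ⊢; exact h
      have h := hp.mul hX
      have e : (fun t : ℝ => MvPolynomial.eval ![x, (t:ℂ)] (p * X k)) =
          fun t : ℝ => MvPolynomial.eval ![x, (t:ℂ)] p * MvPolynomial.eval ![x, (t:ℂ)] (X k) := by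
        funext t; rw [map_mul]
      rw [e, pderiv_mul, map_add, map_mul, map_mul]
      exact h

open MvPolynomial in
lemma pdx_polyEval (P : MvPolynomial (Fin 2) ℂ) :
    pdx (polyEval P) = polyEval (pderiv 0 P) := by
  funext p
  exact (key0 P p.2 p.1).deriv

open MvPolynomial in
lemma pdy_polyEval (P : MvPolynomial (Fin 2) ℂ) :
    pdy (polyEval P) = polyEval (pderiv 1 P) := by
  funext p
  exact (key1 P p.1 p.2).deriv

open MvPolynomial in
/-- the OU operator as a polynomial operator -/
def Apoly (r Ω σ2 : ℝ) (P : MvPolynomial (Fin 2) ℂ) : MvPolynomial (Fin 2) ℂ :=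
  (C (-r : ℂ) * X 0 + C (Ω : ℂ) * X 1) * pderiv 0 P +
    (C (-Ω : ℂ) * X 0 + C (-r : ℂ) * X 1) * pderiv 1 P +
    C (σ2 : ℂ) * (pderiv 0 (pderiv 0 P) + pderiv 1 (pderiv 1 P))

open MvPolynomial in
/-- the adjoint OU operator as a polynomial operator -/
def Bpoly (r Ω σ2 : ℝ) (P : MvPolynomial (Fin 2) ℂ) : MvPolynomial (Fin 2) ℂ :=
  (C (-r : ℂ) * X 0 + C (-Ω : ℂ) * X 1) * pderiv 0 P +
    (C (Ω : ℂ) * X 0 + C (-r : ℂ) * X 1) * pderiv 1 P +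
    C (σ2 : ℂ) * (pderiv 0 (pderiv 0 P) + pderiv 1 (pderiv 1 P))

open MvPolynomial in
lemma OUop_polyEval (r Ω σ2 : ℝ) (P : MvPolynomial (Fin 2) ℂ) :
    (fun q => OUop r Ω σ2 (polyEval P) q) = polyEval (Apoly r Ω σ2 P) := by
  funext q
  show OUop r Ω σ2 (polyEval P) q = _
  unfold OUop Apoly
  simp only [pdx_polyEval, pdy_polyEval]
  simp only [polyEval]
  push_cast
  simp only [map_add, map_mul, eval_C, eval_X, Matrix.cons_val_zero, Matrix.cons_val_one,
    Matrix.head_cons]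
  ring

open MvPolynomial in
lemma OUopStar_polyEval (r Ω σ2 : ℝ) (P : MvPolynomial (Fin 2) ℂ) :
    (fun q => OUopStar r Ω σ2 (polyEval P) q) = polyEval (Bpoly r Ω σ2 P) := by
  funext q
  show OUopStar r Ω σ2 (polyEval P) q = _
  unfold OUopStar Bpoly
  simp only [pdx_polyEval, pdy_polyEval]
  simp only [polyEval]
  push_cast
  simp only [map_add, map_mul, eval_C, eval_X, Matrix.cons_val_zero, Matrix.cons_val_one,
    Matrix.head_cons]
  ring

set_option maxHeartbeats 1000000 in
open MvPolynomial in
lemma commute_poly (r Ω σ2 : ℝ) (P : MvPolynomial (Fin 2) ℂ) :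
    Apoly r Ω σ2 (Bpoly r Ω σ2 P) = Bpoly r Ω σ2 (Apoly r Ω σ2 P) := by
  simp only [Apoly, Bpoly, map_add, pderiv_mul, pderiv_C, pderiv_X_self, pderiv_one,
    map_zero, C_neg, map_neg,
    pderiv_X_of_ne (show (1 : Fin 2) ≠ 0 by decide),
    pderiv_X_of_ne (show (0 : Fin 2) ≠ 1 by decide), pderiv_swap]
  ring

/-- the normal Ornstein–Uhlenbeck operator commutes with its
formal adjoint on polynomial functions: `A A* p = A* A p`. -/
theorem stmt11 (r Ω σ2 : ℝ) (hr : 0 < r) (hσ : 0 < σ2)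
    (P : MvPolynomial (Fin 2) ℂ) (p : ℝ × ℝ) :
    OUop r Ω σ2 (fun q => OUopStar r Ω σ2 (polyEval P) q) p =
      OUopStar r Ω σ2 (fun q => OUop r Ω σ2 (polyEval P) q) p := by
  rw [OUopStar_polyEval, OUop_polyEval]
  have h1 := congrFun (OUop_polyEval r Ω σ2 (Bpoly r Ω σ2 P)) p
  have h2 := congrFun (OUopStar_polyEval r Ω σ2 (Apoly r Ω σ2 P)) p
  rw [h1, h2, commute_poly]

end
end

section
/- Let l ∈ ℕ and λ ∈ ℂ, and let M(λ) be the (l+1) × (l+1) complex tridiagonal matrix with entries M_{j,j} = −λ for 0 ≤ j ≤ l, M_{j,j+1} = j+1 for 0 ≤ j ≤ l−1, M_{j+1,j} = −(l−j) for 0 ≤ j ≤ l−1, and all other entries zero. Then det M(λ) = (−1)^{l+1} · ∏_{j=0}^{l} (λ + (2j − l) · i). -/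
open Complex Finset

noncomputable section

namespace S12
open Polynomial

lemma hI : (C I : ℂ[X]) * C I = -1 := by
  rw [← C_mul, I_mul_I]; simp

def q (l a : ℕ) : ℂ[X] := (C I * X + 1) ^ a * (C (-I) * X + 1) ^ (l - a)

lemma q_deg (l a : ℕ) (ha : a ≤ l) : (q l a).natDegree ≤ l := by
  have h1 : (C I * X + 1 : ℂ[X]).natDegree ≤ 1 := by
    apply natDegree_add_le_of_degree_le
    · simpa using natDegree_C_mul_le I X
    · simp
  have h2 : (C (-I) * X + 1 : ℂ[X]).natDegree ≤ 1 := by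
    apply natDegree_add_le_of_degree_le
    · simpa using natDegree_C_mul_le (-I) X
    · simp
  calc (q l a).natDegree
      ≤ ((C I * X + 1 :ℂ[X]) ^ a).natDegree + ((C (-I) * X + 1:ℂ[X]) ^ (l-a)).natDegree :=
        natDegree_mul_le
    _ ≤ a * 1 + (l - a) * 1 := by
        gcongr <;> [exact natDegree_pow_le_of_le a h1; exact natDegree_pow_le_of_le (l-a) h2]
    _ ≤ l := by omega

lemma key' (a b : ℕ) :
    (C I * X + 1) * (C (-I) * X + 1) *
        derivative ((C I * X + 1) ^ a * (C (-I) * X + 1) ^ b) =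
      (((a + b : ℕ) : ℂ[X]) * X + C (I * ((a : ℂ) - (b : ℂ)))) *
        ((C I * X + 1) ^ a * (C (-I) * X + 1) ^ b) := by
  have h := hI
  cases a with
  | zero =>
    cases b with
    | zero => simp
    | succ b =>
      simp only [derivative_mul, derivative_pow, derivative_add, derivative_one,
        derivative_C_mul, derivative_neg, derivative_X, derivative_C, Nat.add_sub_cancel,
        pow_zero, one_mul, mul_one, C_neg, C_add, C_sub, C_mul, C_1, C_eq_natCast]
      push_cast
      linear_combination (norm := ring_nf)
        (-((b:ℂ[X])+1) * X * ((C I * X + 1) ^ 0 * (-(C I) * X + 1) ^ (b+1))) * h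
  | succ a =>
    cases b with
    | zero =>
      simp only [derivative_mul, derivative_pow, derivative_add, derivative_one,
        derivative_C_mul, derivative_neg, derivative_X, derivative_C, Nat.add_sub_cancel,
        pow_zero, one_mul, mul_one, C_neg, C_add, C_sub, C_mul, C_1, C_eq_natCast]
      push_cast
      linear_combination (norm := ring_nf) (-((a:ℂ[X])+1) * X * ((C I * X + 1) ^ (a+1))) * h
    | succ b =>
      simp only [derivative_mul, derivative_pow, derivative_add, derivative_one,
        derivative_C_mul, derivative_neg, derivative_X, derivative_C, Nat.add_sub_cancel,
        C_neg, C_add, C_sub, C_mul, C_1, C_eq_natCast]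
      push_cast
      linear_combination (norm := ring_nf)
        (-((a:ℂ[X]) + (b:ℂ[X]) + 2) * X * ((C I * X + 1) ^ (a+1) * (-(C I) * X + 1) ^ (b+1))) * h

lemma key (l a : ℕ) (ha : a ≤ l) :
    (1 + X ^ 2) * derivative (q l a) =
      (C (l : ℂ) * X + C (I * (2 * (a:ℂ) - (l:ℂ)))) * q l a := by
  have hpm : (C I * X + 1) * (C (-I) * X + 1) = (1 + X ^ 2 : ℂ[X]) := by
    have h := hI
    rw [C_neg]
    linear_combination (-(X^2) : ℂ[X]) * h
  have h := key' a (l - a)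
  rw [hpm] at h
  rw [show q l a = (C I * X + 1) ^ a * (C (-I) * X + 1) ^ (l-a) from rfl, h]
  congr 2
  · rw [Nat.add_sub_cancel' ha, C_eq_natCast]
  · congr 1
    have : ((l - a : ℕ) : ℂ) = (l : ℂ) - a := by
      push_cast [Nat.cast_sub ha]; ring
    rw [this]; ring

lemma key2 (l a j : ℕ) (ha : a ≤ l) :
    ((j : ℂ) + 1) * (q l a).coeff (j + 1)
      + (if j = 0 then 0 else -((l : ℂ) - ((j - 1 : ℕ) : ℂ)) * (q l a).coeff (j - 1))
    = I * (2 * (a : ℂ) - (l : ℂ)) * (q l a).coeff j := by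
  have hk2 : derivative (q l a) + derivative (q l a) * X ^ 2
      = C (l:ℂ) * (q l a * X ^ 1) + C (I * (2 * (a:ℂ) - (l:ℂ))) * (q l a) := by
    linear_combination key l a ha
  have h := congrArg (fun p : ℂ[X] => p.coeff j) hk2
  simp only [coeff_add, coeff_C_mul, coeff_mul_X_pow', coeff_derivative] at h
  match j with
  | 0 =>
    norm_num at h ⊢
    linear_combination h
  | 1 =>
    norm_num at h ⊢
    linear_combination h
  | (t+2) =>
    have h2 : (2 : ℕ) ≤ t + 2 := by omega
    have h1 : (1 : ℕ) ≤ t + 2 := by omega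
    simp only [if_pos h1, if_pos h2, Nat.add_sub_cancel] at h
    have ht : t + 2 - 1 = t + 1 := by omega
    simp only [ht, if_neg (by omega : ¬ t + 2 = 0)] at h ⊢
    push_cast at h ⊢
    linear_combination h

def Pm (l : ℕ) : Matrix (Fin (l+1)) (Fin (l+1)) ℂ := fun j a => (q l (a:ℕ)).coeff (j:ℕ)

lemma MP (l : ℕ) (lam : ℂ)
    (M : Matrix (Fin (l + 1)) (Fin (l + 1)) ℂ)
    (hM : ∀ j k : Fin (l + 1),
      M j k =
        if (j : ℕ) = (k : ℕ) then -lam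
        else if (k : ℕ) = (j : ℕ) + 1 then ((j : ℕ) + 1 : ℂ)
        else if (j : ℕ) = (k : ℕ) + 1 then -((l : ℂ) - (k : ℕ))
        else 0) :
    M * Pm l = Pm l * Matrix.diagonal
      (fun a : Fin (l+1) => I * (2 * ((a:ℕ):ℂ) - (l:ℂ)) - lam) := by
  ext j a
  have ha : (a:ℕ) ≤ l := Nat.lt_succ_iff.mp a.isLt
  have hj : (j:ℕ) ≤ l := Nat.lt_succ_iff.mp j.isLt
  rw [Matrix.mul_apply, Matrix.mul_diagonal]
  simp only [hM, Pm]
  rw [Fin.sum_univ_eq_sum_range (fun k : ℕ =>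
    (if (j:ℕ) = k then -lam else if k = (j:ℕ)+1 then (((j:ℕ):ℂ)+1)
      else if (j:ℕ) = k+1 then -((l:ℂ) - (k:ℕ)) else 0) * (q l (a:ℕ)).coeff k) (l+1)]
  have hsplit : ∀ k ∈ Finset.range (l+1),
      (if (j:ℕ) = k then -lam else if k = (j:ℕ)+1 then (((j:ℕ):ℂ)+1)
        else if (j:ℕ) = k+1 then -((l:ℂ) - (k:ℕ)) else 0) * (q l (a:ℕ)).coeff k
      = (if (j:ℕ) = k then -lam * (q l (a:ℕ)).coeff k else 0)
        + ((if k = (j:ℕ)+1 then (((j:ℕ):ℂ)+1) * (q l (a:ℕ)).coeff k else 0)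
        + (if (j:ℕ) = k+1 then -((l:ℂ) - (k:ℕ)) * (q l (a:ℕ)).coeff k else 0)) := by
    intro k _
    split_ifs <;> first | ring1 | (exfalso; omega)
  rw [Finset.sum_congr rfl hsplit, Finset.sum_add_distrib, Finset.sum_add_distrib,
    Finset.sum_ite_eq (Finset.range (l+1)) (j:ℕ),
    Finset.sum_ite_eq' (Finset.range (l+1)) ((j:ℕ)+1)]
  have hS2 : (if (j:ℕ)+1 ∈ Finset.range (l+1)
      then (((j:ℕ):ℂ)+1) * (q l (a:ℕ)).coeff ((j:ℕ)+1) else 0)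
      = (((j:ℕ):ℂ)+1) * (q l (a:ℕ)).coeff ((j:ℕ)+1) := by
    split_ifs with h
    · rfl
    · have hjl : (j:ℕ) = l := by simp at h; omega
      rw [Polynomial.coeff_eq_zero_of_natDegree_lt]
      · ring
      · exact lt_of_le_of_lt (q_deg l _ ha) (by omega)
  have hS3 : (∑ k ∈ Finset.range (l+1),
      if (j:ℕ) = k+1 then -((l:ℂ) - (k:ℕ)) * (q l (a:ℕ)).coeff k else 0)
      = (if (j:ℕ) = 0 then 0
        else -((l:ℂ) - (((j:ℕ)-1 : ℕ):ℂ)) * (q l (a:ℕ)).coeff ((j:ℕ)-1)) := by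
    by_cases h0 : (j:ℕ) = 0
    · rw [if_pos h0]
      apply Finset.sum_eq_zero
      intro k _
      rw [if_neg (by omega)]
    · rw [if_neg h0]
      obtain ⟨m, hm⟩ := Nat.exists_eq_succ_of_ne_zero h0
      have hcong : ∀ k ∈ Finset.range (l+1),
          (if (j:ℕ) = k+1 then -((l:ℂ) - (k:ℕ)) * (q l (a:ℕ)).coeff k else 0)
          = (if m = k then -((l:ℂ) - (k:ℕ)) * (q l (a:ℕ)).coeff k else 0) := by
        intro k _
        exact if_congr (by omega) rfl rfl
      rw [Finset.sum_congr rfl hcong, Finset.sum_ite_eq (Finset.range (l+1)) m,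
        if_pos (by simp only [Finset.mem_range]; omega)]
      have hjm : (j:ℕ) - 1 = m := by omega
      rw [hjm]
  rw [hS2, hS3, if_pos (by simp only [Finset.mem_range]; omega)]
  have hk := key2 l (a:ℕ) (j:ℕ) ha
  linear_combination hk

lemma wne (x : ℂ) (hx : x.im = 0) : -I * x + 1 ≠ 0 := by
  intro h
  have := congrArg Complex.re h
  simp [Complex.add_re, Complex.mul_re, hx] at this

lemma VP (l : ℕ) :
    Matrix.vandermonde (fun m : Fin (l+1) => ((m:ℕ):ℂ)) * Pm l
      = Matrix.diagonal (fun m : Fin (l+1) => (-I * ((m:ℕ):ℂ) + 1) ^ l) *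
        Matrix.vandermonde
          (fun m : Fin (l+1) => (I * ((m:ℕ):ℂ) + 1) / (-I * ((m:ℕ):ℂ) + 1)) := by
  ext m a
  have ha : (a:ℕ) ≤ l := Nat.lt_succ_iff.mp a.isLt
  rw [Matrix.mul_apply, Matrix.diagonal_mul]
  set x : ℂ := ((m:ℕ):ℂ) with hx
  have hw : -I * x + 1 ≠ 0 := wne x (by simp [hx])
  have h1 : ∑ k : Fin (l+1), Matrix.vandermonde (fun m : Fin (l+1) => ((m:ℕ):ℂ)) m k * Pm l k a
      = (q l (a:ℕ)).eval x := by
    simp only [Matrix.vandermonde_apply, Pm]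
    rw [Fin.sum_univ_eq_sum_range (fun k : ℕ => x ^ k * (q l (a:ℕ)).coeff k) (l+1)]
    rw [Polynomial.eval_eq_sum_range' (lt_of_le_of_lt (q_deg l _ ha) (Nat.lt_succ_self l)) x]
    exact Finset.sum_congr rfl (fun k _ => mul_comm _ _)
  rw [h1]
  have heval : (q l (a:ℕ)).eval x = (I * x + 1) ^ (a:ℕ) * (-I * x + 1) ^ (l - (a:ℕ)) := by
    simp [q]
  rw [heval]
  have hws : (-I * x + 1) ^ (l - (a:ℕ)) * (-I * x + 1) ^ (a:ℕ) = (-I * x + 1) ^ l :=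
    pow_sub_mul_pow _ ha
  rw [Matrix.vandermonde_apply, ← hx, div_pow, mul_div_assoc', eq_div_iff (pow_ne_zero _ hw)]
  linear_combination ((I * x + 1) ^ (a:ℕ)) * hws

lemma detP_ne (l : ℕ) : (Pm l).det ≠ 0 := by
  have hinj1 : Function.Injective (fun m : Fin (l+1) => ((m:ℕ):ℂ)) := by
    intro m n h
    exact Fin.ext (Nat.cast_injective h)
  have hinj2 : Function.Injective
      (fun m : Fin (l+1) => (I * ((m:ℕ):ℂ) + 1) / (-I * ((m:ℕ):ℂ) + 1)) := by
    intro m n h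
    have hwm := wne ((m:ℕ):ℂ) (by simp)
    have hwn := wne ((n:ℕ):ℂ) (by simp)
    simp only at h
    rw [div_eq_div_iff hwm hwn] at h
    have h2 : (2:ℂ) * I * (((m:ℕ):ℂ) - ((n:ℕ):ℂ)) = 0 := by linear_combination h
    have h3 : ((m:ℕ):ℂ) = ((n:ℕ):ℂ) := by
      rcases mul_eq_zero.mp h2 with h' | h'
      · exfalso
        rcases mul_eq_zero.mp h' with h'' | h''
        · norm_num at h''
        · exact I_ne_zero h''
      · exact sub_eq_zero.mp h'
    exact Fin.ext (Nat.cast_injective h3)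
  have hV : (Matrix.vandermonde (fun m : Fin (l+1) => ((m:ℕ):ℂ))).det ≠ 0 :=
    (Matrix.det_vandermonde_ne_zero_iff).mpr hinj1
  have hW : (Matrix.vandermonde
      (fun m : Fin (l+1) => (I * ((m:ℕ):ℂ) + 1) / (-I * ((m:ℕ):ℂ) + 1))).det ≠ 0 :=
    (Matrix.det_vandermonde_ne_zero_iff).mpr hinj2
  have hd : (∏ m : Fin (l+1), (-I * ((m:ℕ):ℂ) + 1) ^ l) ≠ 0 :=
    Finset.prod_ne_zero_iff.mpr (fun m _ => pow_ne_zero _ (wne _ (by simp)))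
  have hdet := congrArg Matrix.det (VP l)
  rw [Matrix.det_mul, Matrix.det_mul, Matrix.det_diagonal] at hdet
  intro h0
  rw [h0, mul_zero] at hdet
  exact (mul_ne_zero hd hW) hdet.symm

end S12

/-- determinant of the tridiagonal matrix `M(λ)` with diagonal
`−λ`, superdiagonal entries `M_{j,j+1} = j+1` and subdiagonal entries
`M_{j+1,j} = −(l−j)`:  `det M(λ) = (−1)^{l+1} ∏_{j=0}^{l} (λ + (2j−l) i)`. -/
theorem stmt12 (l : ℕ) (lam : ℂ)
    (M : Matrix (Fin (l + 1)) (Fin (l + 1)) ℂ)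
    (hM : ∀ j k : Fin (l + 1),
      M j k =
        if (j : ℕ) = (k : ℕ) then -lam
        else if (k : ℕ) = (j : ℕ) + 1 then ((j : ℕ) + 1 : ℂ)
        else if (j : ℕ) = (k : ℕ) + 1 then -((l : ℂ) - (k : ℕ))
        else 0) :
    M.det = (-1 : ℂ) ^ (l + 1) *
      ∏ j ∈ Finset.range (l + 1), (lam + (2 * (j : ℂ) - (l : ℂ)) * Complex.I) := by
  have hMP := S12.MP l lam M hM
  have h5 := congrArg Matrix.det hMP
  rw [Matrix.det_mul, Matrix.det_mul, Matrix.det_diagonal] at h5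
  rw [mul_comm ((S12.Pm l).det)] at h5
  have hdetM := mul_right_cancel₀ (S12.detP_ne l) h5
  rw [hdetM]
  rw [Fin.prod_univ_eq_prod_range (fun a : ℕ => I * (2 * (a:ℂ) - (l:ℂ)) - lam) (l+1)]
  rw [← Finset.prod_range_reflect (fun a : ℕ => I * (2 * (a:ℂ) - (l:ℂ)) - lam) (l+1)]
  have hcong : ∀ j ∈ Finset.range (l+1),
      I * (2 * ((l + 1 - 1 - j : ℕ):ℂ) - (l:ℂ)) - lam
      = (-1) * (lam + (2 * (j:ℂ) - (l:ℂ)) * I) := by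
    intro j hj
    simp only [Finset.mem_range] at hj
    have hjl : j ≤ l := by omega
    rw [show l + 1 - 1 - j = l - j from by omega, Nat.cast_sub hjl]
    ring
  rw [Finset.prod_congr rfl hcong, Finset.prod_mul_distrib, Finset.prod_const,
    Finset.card_range]
end
end

section
/- Let m, n ∈ ℕ, l = m + n, ρ > 0, Ω ∈ ℝ with Ω ≠ 0, λ ∈ ℂ, and β_0, …, β_l ∈ ℂ; set β_{−1} = β_{l+1} = 0. Define the operator 𝒥 f := −iΩ (y ∂f/∂x − x ∂f/∂y). If the function G(x,y) := ∑_{k=0}^{l} β_k · H_k(x, ρ/2) · H_{l−k}(y, ρ/2) satisfies 𝒥 G = −iλΩ · G pointwise on ℝ², then for every 0 ≤ k ≤ l one has −(l−k+1) β_{k−1} − λ β_k + (k+1) β_{k+1} = 0. -/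
open MeasureTheory Complex Finset

noncomputable section

/-- Hermite polynomial with variance parameter ρ:
`H_n(x,ρ) = ∑_{k=0}^{⌊n/2⌋} C(n,2k) (2k−1)!! x^{n−2k} (−ρ)^k`. -/
def Herm (n : ℕ) (x ρ : ℝ) : ℝ :=
  ∑ k ∈ Finset.range (n / 2 + 1),
    (n.choose (2 * k) : ℝ) * ((2 * k - 1).doubleFactorial : ℝ) * x ^ (n - 2 * k) * (-ρ) ^ k

/-- the operator `𝒥 f = −iΩ (y ∂f/∂x − x ∂f/∂y)`. -/
def Jop (Ω : ℝ) (f : ℝ × ℝ → ℂ) (p : ℝ × ℝ) : ℂ :=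
  -Complex.I * (Ω : ℂ) * ((p.2 : ℂ) * pdx f p - (p.1 : ℂ) * pdy f p)

section Aux
open Polynomial

def HermP (ρ : ℝ) : ℕ → Polynomial ℝ
  | 0 => 1
  | (n+1) => X * HermP ρ n - C ((n : ℝ) * ρ) * HermP ρ (n - 1)

lemma HermP_zero (ρ : ℝ) : HermP ρ 0 = 1 := by simp [HermP]
lemma HermP_succ (ρ : ℝ) (n : ℕ) :
    HermP ρ (n+1) = X * HermP ρ n - C ((n : ℝ) * ρ) * HermP ρ (n - 1) := by
  conv_lhs => rw [HermP]

lemma HermP_monic (ρ : ℝ) : ∀ n, (HermP ρ n).Monic ∧ (HermP ρ n).natDegree = n := by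
  intro n
  induction n using Nat.strong_induction_on with
  | _ n ih =>
    match n with
    | 0 => rw [HermP_zero]; exact ⟨monic_one, natDegree_one⟩
    | (n+1) =>
      obtain ⟨h1, h2⟩ := ih n (by omega)
      obtain ⟨h3, h4⟩ := ih (n-1) (by omega)
      rw [HermP_succ]
      have hm : (X * HermP ρ n).Monic := monic_X.mul h1
      have hdeg : (X * HermP ρ n).natDegree = n + 1 := by
        rw [natDegree_mul X_ne_zero h1.ne_zero, natDegree_X, h2, add_comm]
      have hlt : (C ((n : ℕ) * ρ) * HermP ρ (n - 1)).natDegree < (X * HermP ρ n).natDegree := by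
        rw [hdeg]
        calc (C ((n : ℕ) * ρ) * HermP ρ (n-1)).natDegree
            ≤ 0 + (HermP ρ (n-1)).natDegree := natDegree_mul_le.trans (by rw [natDegree_C])
          _ < n + 1 := by omega
      refine ⟨hm.sub_of_left (degree_lt_degree hlt), ?_⟩
      rw [natDegree_sub_eq_left_of_natDegree_lt hlt, hdeg]

lemma HermP_derivative (ρ : ℝ) : ∀ n, (HermP ρ n).derivative = C (n : ℝ) * HermP ρ (n - 1) := by
  intro n
  induction n using Nat.strong_induction_on with
  | _ n ih =>
    match n with
    | 0 => simp [HermP_zero]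
    | 1 => simp [HermP_succ, HermP_zero]
    | (n+2) =>
      rw [HermP_succ]
      rw [derivative_sub, derivative_mul, derivative_X, derivative_mul, derivative_C,
        ih (n+1) (by omega)]
      have hrec : HermP ρ (n+1) = X * HermP ρ n - C ((n : ℝ) * ρ) * HermP ρ (n - 1) :=
        HermP_succ ρ n
      have e1 : (n + 2 : ℕ) - 1 = n + 1 := by omega
      have e2 : (n + 1 : ℕ) - 1 = n := by omega
      rw [e1, e2, ih n (by omega), hrec]
      push_cast
      simp only [map_add, map_mul, map_one, map_ofNat]
      ring

lemma natkey (n k : ℕ) :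
    (n+2).choose (2*k+2) * (2*k+1).doubleFactorial =
      (n+1).choose (2*k+2) * (2*k+1).doubleFactorial +
        (n+1) * (n.choose (2*k) * (2*k-1).doubleFactorial) := by
  have pascal : (n+2).choose (2*k+2) = (n+1).choose (2*k+1) + (n+1).choose (2*k+2) :=
    Nat.choose_succ_succ' (n+1) (2*k+1)
  have h1 : (n+1) * n.choose (2*k) = (n+1).choose (2*k+1) * (2*k+1) :=
    Nat.add_one_mul_choose_eq n (2*k)
  have h2 : (2*k+1).doubleFactorial = (2*k+1) * (2*k-1).doubleFactorial :=
    Nat.doubleFactorial_add_one (2*k)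
  calc (n+2).choose (2*k+2) * (2*k+1).doubleFactorial 
      = (n+1).choose (2*k+1) * (2*k+1).doubleFactorial
        + (n+1).choose (2*k+2) * (2*k+1).doubleFactorial := by rw [pascal, Nat.add_mul]
    _ = _ := by
        rw [h2, ← Nat.mul_assoc, ← h1]; ring

lemma key (n k : ℕ) (x ρ : ℝ) :
    ((n+2).choose (2*(k+1)) : ℝ) * ((2*(k+1)-1).doubleFactorial : ℝ) * x^(n+2-2*(k+1)) * (-ρ)^(k+1)
    = x * (((n+1).choose (2*(k+1)) : ℝ) * ((2*(k+1)-1).doubleFactorial : ℝ) * x^(n+1-2*(k+1)) * (-ρ)^(k+1))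
      - (n+1 : ℝ) * ρ * ((n.choose (2*k) : ℝ) * ((2*k-1).doubleFactorial : ℝ) * x^(n-2*k) * (-ρ)^k) := by
  have e1 : 2*(k+1) - 1 = 2*k+1 := by omega
  have e2 : 2*(k+1) = 2*k+2 := by omega
  rw [e1, e2]
  have hnat : ((n+2).choose (2*k+2) : ℝ) * ((2*k+1).doubleFactorial : ℝ) =
      ((n+1).choose (2*k+2) : ℝ) * ((2*k+1).doubleFactorial : ℝ) +
        (n+1 : ℝ) * ((n.choose (2*k) : ℝ) * ((2*k-1).doubleFactorial : ℝ)) := by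
    exact_mod_cast congrArg (Nat.cast : ℕ → ℝ) (natkey n k)
  by_cases h : 2*k+2 ≤ n+1
  · have hx1 : x^(n+2-(2*k+2)) = x * x^(n+1-(2*k+2)) := by
      rw [show n+2-(2*k+2) = (n+1-(2*k+2)) + 1 by omega, pow_succ]; ring
    have hx2 : x^(n-2*k) = x * x^(n+1-(2*k+2)) := by
      rw [show n-2*k = (n+1-(2*k+2)) + 1 by omega, pow_succ]; ring
    rw [hx1, hx2, pow_succ]
    linear_combination hnat * (x * x^(n+1-(2*k+2)) * ((-ρ)^k * -ρ))
  · have hz : ((n+1).choose (2*k+2) : ℝ) = 0 := by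
      rw [Nat.choose_eq_zero_of_lt (by omega)]; simp
    have e3 : n+2-(2*k+2) = n-2*k := by omega
    rw [hz, e3, pow_succ]
    rw [hz, zero_mul, zero_add] at hnat
    linear_combination hnat * (x^(n-2*k) * ((-ρ)^k * -ρ))

lemma Herm_ext (n N : ℕ) (h : n/2+1 ≤ N) (x ρ : ℝ) :
    Herm n x ρ = ∑ k ∈ Finset.range N,
      (n.choose (2 * k) : ℝ) * ((2 * k - 1).doubleFactorial : ℝ) * x ^ (n - 2 * k) * (-ρ) ^ k := by
  rw [Herm]
  refine Finset.sum_subset (Finset.range_subset_range.2 h) ?_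
  intro k _ hk
  simp only [Finset.mem_range, not_lt] at hk
  have : n < 2 * k := by omega
  rw [Nat.choose_eq_zero_of_lt this]
  simp

lemma Herm_zero (x ρ : ℝ) : Herm 0 x ρ = 1 := by simp [Herm]
lemma Herm_one (x ρ : ℝ) : Herm 1 x ρ = x := by simp [Herm, Nat.doubleFactorial]

lemma Herm_rec (n : ℕ) (x ρ : ℝ) :
    Herm (n+2) x ρ = x * Herm (n+1) x ρ - ((n:ℝ)+1) * ρ * Herm n x ρ := by
  rw [Herm_ext (n+2) (n+3) (by omega), Herm_ext (n+1) (n+3) (by omega),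
    Herm_ext n (n+2) (by omega)]
  rw [Finset.mul_sum, Finset.mul_sum]
  rw [Finset.sum_range_succ' (fun k => ((n+2).choose (2*k) : ℝ) * ((2*k-1).doubleFactorial : ℝ) * x^(n+2-2*k) * (-ρ)^k) (n+2)]
  rw [Finset.sum_range_succ' (fun k => x * (((n+1).choose (2*k) : ℝ) * ((2*k-1).doubleFactorial : ℝ) * x^(n+1-2*k) * (-ρ)^k)) (n+2)]
  have hterm : ∀ k ∈ Finset.range (n+2),
      ((n+2).choose (2*(k+1)) : ℝ) * ((2*(k+1)-1).doubleFactorial : ℝ) * x^(n+2-2*(k+1)) * (-ρ)^(k+1)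
      = x * (((n+1).choose (2*(k+1)) : ℝ) * ((2*(k+1)-1).doubleFactorial : ℝ) * x^(n+1-2*(k+1)) * (-ρ)^(k+1))
        - ((n:ℝ)+1) * ρ * ((n.choose (2*k) : ℝ) * ((2*k-1).doubleFactorial : ℝ) * x^(n-2*k) * (-ρ)^k) := by
    intro k _
    exact key n k x ρ
  rw [Finset.sum_congr rfl hterm, Finset.sum_sub_distrib]
  simp only [Nat.choose_zero_right, Nat.cast_one, pow_zero, mul_one, Nat.sub_zero, Nat.mul_zero,
    Nat.zero_sub, Nat.doubleFactorial]
  rw [← Finset.mul_sum]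
  ring

lemma HermP_eval (ρ : ℝ) : ∀ n (x : ℝ), (HermP ρ n).eval x = Herm n x ρ := by
  intro n
  induction n using Nat.strong_induction_on with
  | _ n ih =>
    intro x
    match n with
    | 0 => rw [HermP_zero, Herm_zero]; simp
    | 1 => rw [HermP_succ, HermP_zero, Herm_one]; simp [HermP_zero]
    | (n+2) =>
      rw [HermP_succ, Herm_rec]
      simp only [eval_sub, eval_mul, eval_X, eval_C, Nat.add_sub_cancel]
      rw [ih (n+1) (by omega), ih n (by omega)]
      push_cast
      ring

lemma Herm_ne_zero (ρ : ℝ) (m : ℕ) : ∃ y : ℝ, Herm m y ρ ≠ 0 := by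
  by_contra hall
  push_neg at hall
  have : HermP ρ m = 0 := by
    apply Polynomial.eq_zero_of_infinite_isRoot
    have : {x : ℝ | (HermP ρ m).IsRoot x} = Set.univ := by
      ext x; simp only [Set.mem_setOf_eq, Set.mem_univ, iff_true, Polynomial.IsRoot]
      rw [HermP_eval]; exact hall x
    rw [this]; exact Set.infinite_univ
  exact (HermP_monic ρ m).1.ne_zero this

lemma lin_indep (ρ : ℝ) (l : ℕ) (c : ℕ → ℂ)
    (h : ∀ x y : ℝ, ∑ k ∈ Finset.range (l+1),
      c k * ((Herm k x ρ : ℝ) : ℂ) * ((Herm (l-k) y ρ : ℝ) : ℂ) = 0) :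
    ∀ k, k ≤ l → c k = 0 := by
  set Q : ℕ → Polynomial ℂ := fun k => (HermP ρ k).map (algebraMap ℝ ℂ) with hQ
  have hQmonic : ∀ k, (Q k).Monic := fun k => ((HermP_monic ρ k).1).map _
  have hQdeg : ∀ k, (Q k).natDegree = k := by
    intro k
    rw [hQ]
    rw [(HermP_monic ρ k).1.natDegree_map]
    exact (HermP_monic ρ k).2
  have hQtop : ∀ k, (Q k).coeff k = 1 := by
    intro k
    have := (hQmonic k).coeff_natDegree
    rwa [hQdeg k] at this
  have hco : ∀ (y : ℝ) (j : ℕ),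
      ∑ k ∈ Finset.range (l+1), c k * ((Herm (l-k) y ρ : ℝ) : ℂ) * (Q k).coeff j = 0 := by
    intro y j
    have hP : (∑ k ∈ Finset.range (l+1),
        Polynomial.C (c k * ((Herm (l-k) y ρ : ℝ) : ℂ)) * Q k) = 0 := by
      apply Polynomial.eq_zero_of_infinite_isRoot
      apply Set.infinite_of_injective_forall_mem (f := fun x : ℝ => (x : ℂ))
      · exact Complex.ofReal_injective
      · intro x
        simp only [Set.mem_setOf_eq, Polynomial.IsRoot, Polynomial.eval_finset_sum,
          Polynomial.eval_mul, Polynomial.eval_C]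
        have heval : ∀ k, Polynomial.eval (x:ℂ) (Q k) = ((Herm k x ρ : ℝ) : ℂ) := by
          intro k
          rw [hQ]
          rw [Polynomial.eval_map, show ((x:ℂ)) = algebraMap ℝ ℂ x from rfl,
            Polynomial.eval₂_at_apply, HermP_eval]
          rfl
        calc ∑ k ∈ Finset.range (l+1),
              c k * ((Herm (l-k) y ρ : ℝ) : ℂ) * Polynomial.eval (x:ℂ) (Q k)
            = ∑ k ∈ Finset.range (l+1),
              c k * ((Herm k x ρ : ℝ) : ℂ) * ((Herm (l-k) y ρ : ℝ) : ℂ) := by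
              refine Finset.sum_congr rfl fun k _ => ?_
              rw [heval]; ring
          _ = 0 := h x y
    have := congrArg (fun p => Polynomial.coeff p j) hP
    simpa [Polynomial.finset_sum_coeff, Polynomial.coeff_C_mul, mul_assoc] using this
  intro k hk
  have main : ∀ j : ℕ, ∀ k, k ≤ l → l - k = j → c k = 0 := by
    intro j
    induction j using Nat.strong_induction_on with
    | _ j ih =>
      intro k hk hjk
      have hred : ∀ y : ℝ, c k * ((Herm (l-k) y ρ : ℝ) : ℂ) = 0 := by
        intro y
        have hs := hco y k
        have hsum : ∑ i ∈ Finset.range (l+1), c i * ((Herm (l-i) y ρ : ℝ) : ℂ) * (Q i).coeff k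
            = c k * ((Herm (l-k) y ρ : ℝ) : ℂ) * (Q k).coeff k := by
          refine Finset.sum_eq_single_of_mem k (Finset.mem_range.2 (by omega)) ?_
          intro i hi hne
          have hil : i ≤ l := by
            have := Finset.mem_range.1 hi; omega
          rcases lt_or_gt_of_ne hne with hlt | hgt
          · rw [Polynomial.coeff_eq_zero_of_natDegree_lt (by rw [hQdeg]; omega)]
            ring
          · rw [ih (l - i) (by omega) i hil rfl]
            ring
        rw [hsum, hQtop k, mul_one] at hs
        exact hs
      obtain ⟨y, hy⟩ := Herm_ne_zero ρ (l-k)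
      rcases mul_eq_zero.1 (hred y) with h1 | h2
      · exact h1
      · exact absurd (Complex.ofReal_eq_zero.1 h2) hy
  exact main (l-k) k hk rfl

lemma Herm_hasDerivAt (ρ : ℝ) (n : ℕ) (x : ℝ) :
    HasDerivAt (fun t => Herm n t ρ) ((n:ℝ) * Herm (n-1) x ρ) x := by
  have h1 := (HermP ρ n).hasDerivAt x
  rw [HermP_derivative] at h1
  simp only [Polynomial.eval_mul, Polynomial.eval_C, HermP_eval] at h1
  exact h1

lemma Herm_mul_x (n : ℕ) (x ρ : ℝ) :
    x * Herm n x ρ = Herm (n+1) x ρ + (n:ℝ) * ρ * Herm (n-1) x ρ := by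
  match n with
  | 0 => simp [Herm_zero, Herm_one]
  | (n+1) =>
    rw [Herm_rec n x ρ]
    simp only [Nat.add_sub_cancel]
    push_cast
    ring

lemma ofReal_herm_mul_x (n : ℕ) (x ρ : ℝ) :
    (x:ℂ) * ((Herm n x ρ : ℝ) : ℂ) =
      ((Herm (n+1) x ρ : ℝ) : ℂ) + (n:ℂ) * (ρ:ℂ) * ((Herm (n-1) x ρ : ℝ) : ℂ) := by
  have := congrArg (fun t : ℝ => (t : ℂ)) (Herm_mul_x n x ρ)
  push_cast at this
  simpa using this

theorem stmt13' (l : ℕ) (ρ : ℝ) (Ω : ℝ) (hΩ : Ω ≠ 0) (lam : ℂ) (β : ℤ → ℂ)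
    (hβneg : β (-1) = 0) (hβtop : β ((l : ℤ) + 1) = 0)
    (hG : ∀ p : ℝ × ℝ,
      (-Complex.I * (Ω : ℂ) *
        ((p.2 : ℂ) * deriv (fun x : ℝ => ∑ k ∈ Finset.range (l + 1),
            β (k : ℤ) * ((Herm k x (ρ / 2) : ℝ) : ℂ) * ((Herm (l - k) p.2 (ρ / 2) : ℝ) : ℂ)) p.1
          - (p.1 : ℂ) * deriv (fun y : ℝ => ∑ k ∈ Finset.range (l + 1),
            β (k : ℤ) * ((Herm k p.1 (ρ / 2) : ℝ) : ℂ) * ((Herm (l - k) y (ρ / 2) : ℝ) : ℂ)) p.2)) =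
      -Complex.I * lam * (Ω : ℂ) *
        ∑ k ∈ Finset.range (l + 1),
          β (k : ℤ) * ((Herm k p.1 (ρ / 2) : ℝ) : ℂ) * ((Herm (l - k) p.2 (ρ / 2) : ℝ) : ℂ)) :
    ∀ k : ℕ, k ≤ l →
      -((l : ℂ) - (k : ℂ) + 1) * β ((k : ℤ) - 1) - lam * β (k : ℤ) +
        ((k : ℂ) + 1) * β ((k : ℤ) + 1) = 0 := by
  set σ : ℝ := ρ / 2 with hσ
  have main : ∀ j, j ≤ l → (fun j : ℕ =>
      ((j:ℂ)+1) * β ((j:ℤ)+1) - (((l-j : ℕ):ℂ)+1) * β ((j:ℤ)-1) - lam * β (j:ℤ)) j = 0 := by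
    apply lin_indep σ l
    intro x y
    have hdx : HasDerivAt (fun t : ℝ => ∑ k ∈ Finset.range (l + 1),
        β (k : ℤ) * ((Herm k t σ : ℝ) : ℂ) * ((Herm (l - k) y σ : ℝ) : ℂ))
        (∑ k ∈ Finset.range (l + 1),
          β (k : ℤ) * (((k:ℝ) * Herm (k-1) x σ : ℝ) : ℂ) * ((Herm (l - k) y σ : ℝ) : ℂ)) x := by
      apply HasDerivAt.fun_sum
      intro k _
      exact (((Herm_hasDerivAt σ k x).ofReal_comp).const_mul (β (k:ℤ))).mul_const _
    have hdy : HasDerivAt (fun t : ℝ => ∑ k ∈ Finset.range (l + 1),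
        β (k : ℤ) * ((Herm k x σ : ℝ) : ℂ) * ((Herm (l - k) t σ : ℝ) : ℂ))
        (∑ k ∈ Finset.range (l + 1),
          β (k : ℤ) * ((Herm k x σ : ℝ) : ℂ) * ((((l-k : ℕ):ℝ) * Herm (l-k-1) y σ : ℝ) : ℂ)) y := by
      apply HasDerivAt.fun_sum
      intro k _
      exact ((Herm_hasDerivAt σ (l-k) y).ofReal_comp).const_mul _
    have hGxy := hG (x, y)
    simp only [] at hGxy
    rw [hdx.deriv, hdy.deriv] at hGxy
    have hfactor : (-Complex.I * (Ω:ℂ)) ≠ 0 := by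
      simp [Complex.I_ne_zero, Complex.ofReal_eq_zero, hΩ]
    have hid : (y:ℂ) * (∑ k ∈ Finset.range (l + 1),
          β (k : ℤ) * (((k:ℝ) * Herm (k-1) x σ : ℝ) : ℂ) * ((Herm (l - k) y σ : ℝ) : ℂ))
        - (x:ℂ) * (∑ k ∈ Finset.range (l + 1),
          β (k : ℤ) * ((Herm k x σ : ℝ) : ℂ) * ((((l-k : ℕ):ℝ) * Herm (l-k-1) y σ : ℝ) : ℂ))
        = lam * ∑ k ∈ Finset.range (l + 1),
            β (k : ℤ) * ((Herm k x σ : ℝ) : ℂ) * ((Herm (l - k) y σ : ℝ) : ℂ) := by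
      apply mul_left_cancel₀ hfactor
      rw [mul_assoc] at hGxy ⊢
      rw [hGxy]
      ring
    -- step 1: rewrite y·Sx − x·Sy as A − B using the three-term recurrences
    have hterm : (y:ℂ) * (∑ k ∈ Finset.range (l + 1),
          β (k : ℤ) * (((k:ℝ) * Herm (k-1) x σ : ℝ) : ℂ) * ((Herm (l - k) y σ : ℝ) : ℂ))
        - (x:ℂ) * (∑ k ∈ Finset.range (l + 1),
          β (k : ℤ) * ((Herm k x σ : ℝ) : ℂ) * ((((l-k : ℕ):ℝ) * Herm (l-k-1) y σ : ℝ) : ℂ))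
        = (∑ k ∈ Finset.range (l + 1),
            (k:ℂ) * β (k:ℤ) * ((Herm (k-1) x σ : ℝ) : ℂ) * ((Herm (l-k+1) y σ : ℝ) : ℂ))
          - ∑ k ∈ Finset.range (l + 1),
            ((l-k : ℕ):ℂ) * β (k:ℤ) * ((Herm (k+1) x σ : ℝ) : ℂ) * ((Herm (l-k-1) y σ : ℝ) : ℂ) := by
      rw [Finset.mul_sum, Finset.mul_sum, ← Finset.sum_sub_distrib, ← Finset.sum_sub_distrib]
      refine Finset.sum_congr rfl fun k _ => ?_
      have hxr := ofReal_herm_mul_x k x σ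
      have hyr := ofReal_herm_mul_x (l-k) y σ
      push_cast
      linear_combination (β (k:ℤ) * (k:ℂ) * ((Herm (k-1) x σ : ℝ) : ℂ)) * hyr
        - (β (k:ℤ) * ((l-k : ℕ):ℂ) * ((Herm (l-k-1) y σ : ℝ) : ℂ)) * hxr
    -- step 2: reindex A
    have hA : (∑ k ∈ Finset.range (l + 1),
          (k:ℂ) * β (k:ℤ) * ((Herm (k-1) x σ : ℝ) : ℂ) * ((Herm (l-k+1) y σ : ℝ) : ℂ))
        = ∑ k ∈ Finset.range (l + 1),
          ((k:ℂ)+1) * β ((k:ℤ)+1) * ((Herm k x σ : ℝ) : ℂ) * ((Herm (l-k) y σ : ℝ) : ℂ) := by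
      rw [Finset.sum_range_succ' (fun k => (k:ℂ) * β (k:ℤ) * ((Herm (k-1) x σ : ℝ) : ℂ)
          * ((Herm (l-k+1) y σ : ℝ) : ℂ)) l]
      rw [Finset.sum_range_succ (fun k => ((k:ℂ)+1) * β ((k:ℤ)+1) * ((Herm k x σ : ℝ) : ℂ)
          * ((Herm (l-k) y σ : ℝ) : ℂ)) l]
      simp only [Nat.cast_zero, zero_mul, add_zero]
      rw [show ((l:ℂ)+1) * β ((l:ℤ)+1) * ((Herm l x σ : ℝ) : ℂ) * ((Herm (l-l) y σ : ℝ) : ℂ) = 0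
        by rw [hβtop]; ring]
      rw [add_zero]
      refine Finset.sum_congr rfl fun k hk => ?_
      have hkl : k < l := Finset.mem_range.1 hk
      rw [show l - (k+1) + 1 = l - k by omega]
      push_cast
      ring
    -- step 3: reindex B
    have hB : (∑ k ∈ Finset.range (l + 1),
          ((l-k : ℕ):ℂ) * β (k:ℤ) * ((Herm (k+1) x σ : ℝ) : ℂ) * ((Herm (l-k-1) y σ : ℝ) : ℂ))
        = ∑ k ∈ Finset.range (l + 1),
          (((l-k : ℕ):ℂ)+1) * β ((k:ℤ)-1) * ((Herm k x σ : ℝ) : ℂ) * ((Herm (l-k) y σ : ℝ) : ℂ) := by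
      rw [Finset.sum_range_succ (fun k => ((l-k : ℕ):ℂ) * β (k:ℤ) * ((Herm (k+1) x σ : ℝ) : ℂ)
          * ((Herm (l-k-1) y σ : ℝ) : ℂ)) l]
      rw [Finset.sum_range_succ' (fun k => (((l-k : ℕ):ℂ)+1) * β ((k:ℤ)-1)
          * ((Herm k x σ : ℝ) : ℂ) * ((Herm (l-k) y σ : ℝ) : ℂ)) l]
      rw [show ((l-l : ℕ):ℂ) * β (l:ℤ) * ((Herm (l+1) x σ : ℝ) : ℂ) * ((Herm (l-l-1) y σ : ℝ) : ℂ) = 0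
        by rw [Nat.sub_self]; push_cast; ring]
      rw [show (((l-0 : ℕ):ℂ)+1) * β (((0:ℕ):ℤ)-1) * ((Herm 0 x σ : ℝ) : ℂ)
          * ((Herm (l-0) y σ : ℝ) : ℂ) = 0 from by norm_num [hβneg]]
      rw [add_zero, add_zero]
      refine Finset.sum_congr rfl fun k hk => ?_
      have hkl : k < l := Finset.mem_range.1 hk
      have e1 : l - (k+1) = l - k - 1 := by omega
      rw [e1, show (((k+1 : ℕ):ℤ))-1 = (k:ℤ) from by push_cast; ring,
        show (l - k : ℕ) = (l - k - 1) + 1 from by omega]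
      push_cast
      ring
    -- assemble
    have expand : ∑ k ∈ Finset.range (l + 1),
        (((k:ℂ)+1) * β ((k:ℤ)+1) - (((l-k : ℕ):ℂ)+1) * β ((k:ℤ)-1) - lam * β (k:ℤ))
          * ((Herm k x σ : ℝ) : ℂ) * ((Herm (l-k) y σ : ℝ) : ℂ)
        = (∑ k ∈ Finset.range (l + 1),
            ((k:ℂ)+1) * β ((k:ℤ)+1) * ((Herm k x σ : ℝ) : ℂ) * ((Herm (l-k) y σ : ℝ) : ℂ))
          - (∑ k ∈ Finset.range (l + 1),
            (((l-k : ℕ):ℂ)+1) * β ((k:ℤ)-1) * ((Herm k x σ : ℝ) : ℂ) * ((Herm (l-k) y σ : ℝ) : ℂ))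
          - lam * ∑ k ∈ Finset.range (l + 1),
            β (k:ℤ) * ((Herm k x σ : ℝ) : ℂ) * ((Herm (l-k) y σ : ℝ) : ℂ) := by
      rw [Finset.mul_sum, ← Finset.sum_sub_distrib, ← Finset.sum_sub_distrib]
      exact Finset.sum_congr rfl fun k _ => by ring
    rw [expand, ← hA, ← hB, ← hterm, hid]
    ring
  intro k hk
  have := main k hk
  simp only [] at this
  have hcast : ((l - k : ℕ) : ℂ) = (l:ℂ) - (k:ℂ) := by
    push_cast [Nat.cast_sub hk]; ring
  rw [hcast] at this
  linear_combination this

end Aux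

/-- if `G(x,y) = ∑_{k=0}^{l} β_k H_k(x,ρ/2) H_{l−k}(y,ρ/2)`
satisfies `𝒥 G = −iλΩ G` pointwise, then the coefficients satisfy the
tridiagonal recursion `−(l−k+1) β_{k−1} − λ β_k + (k+1) β_{k+1} = 0`
(with `β_{−1} = β_{l+1} = 0`). -/
theorem stmt13 (m n : ℕ) (l : ℕ) (hl : l = m + n) (ρ : ℝ) (hρ : 0 < ρ)
    (Ω : ℝ) (hΩ : Ω ≠ 0) (lam : ℂ) (β : ℤ → ℂ)
    (hβneg : β (-1) = 0) (hβtop : β ((l : ℤ) + 1) = 0)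
    (hG : ∀ p : ℝ × ℝ,
      Jop Ω
        (fun q => ∑ k ∈ Finset.range (l + 1),
          β (k : ℤ) * ((Herm k q.1 (ρ / 2) : ℝ) : ℂ) * ((Herm (l - k) q.2 (ρ / 2) : ℝ) : ℂ)) p =
      -Complex.I * lam * (Ω : ℂ) *
        ∑ k ∈ Finset.range (l + 1),
          β (k : ℤ) * ((Herm k p.1 (ρ / 2) : ℝ) : ℂ) * ((Herm (l - k) p.2 (ρ / 2) : ℝ) : ℂ)) :
    ∀ k : ℕ, k ≤ l →
      -((l : ℂ) - (k : ℂ) + 1) * β ((k : ℤ) - 1) - lam * β (k : ℤ) +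
        ((k : ℂ) + 1) * β ((k : ℤ) + 1) = 0 := by
  apply stmt13' l ρ Ω hΩ lam β hβneg hβtop
  intro p
  have := hG p
  simpa [Jop, pdx, pdy] using this

end
end

section
/- Let m, n ∈ ℕ, l = m + n, and β_0, …, β_l ∈ ℂ with β_{−1} = β_{l+1} = 0. If −(l−k+1) β_{k−1} + (m−n) i β_k + (k+1) β_{k+1} = 0 for every 0 ≤ k ≤ l, then there exists a constant c ∈ ℂ such that ∑_{k=0}^{l} β_k · x^k · y^{l−k} = c · (x + iy)^m · (x − iy)^n for all x, y ∈ ℝ. -/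
open Complex Finset

noncomputable section

namespace Stmt14Aux
open Polynomial

def Q (m n : ℕ) : Polynomial ℂ := (X + C Complex.I) ^ m * (X - C Complex.I) ^ n

lemma monic_Q (m n : ℕ) : (Q m n).Monic :=
  ((monic_X_add_C Complex.I).pow m).mul ((monic_X_sub_C Complex.I).pow n)

lemma natDegree_Q (m n : ℕ) : (Q m n).natDegree = m + n := by
  rw [Q, ((monic_X_add_C Complex.I).pow m).natDegree_mul ((monic_X_sub_C Complex.I).pow n)]
  simp [natDegree_pow]

lemma coeff0_ne (m n : ℕ) : (Q m n).coeff 0 ≠ 0 := by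
  rw [coeff_zero_eq_eval_zero]; simp [Q]

lemma pow_pred (p : Polynomial ℂ) (m : ℕ) :
    p * (C (m:ℂ) * p ^ (m-1)) = C (m:ℂ) * p ^ m := by
  cases m with
  | zero => simp
  | succ m => simp [pow_succ]; ring

lemma ode (m n : ℕ) :
    derivative (Q m n) + X * (X * derivative (Q m n)) =
      C ((m:ℂ) + n) * (X * Q m n) - C (((m:ℂ) - n) * Complex.I) * Q m n := by
  have hd : derivative (Q m n) =
      C (m:ℂ) * (X + C Complex.I) ^ (m-1) * (X - C Complex.I) ^ n +
      C (n:ℂ) * (X + C Complex.I) ^ m * (X - C Complex.I) ^ (n-1) := by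
    simp [Q, derivative_mul, derivative_pow]
    ring
  have h1 : (1 + X^2 : Polynomial ℂ) = (X + C Complex.I) * (X - C Complex.I) := by
    have h : (C Complex.I : Polynomial ℂ)^2 = -1 := by
      rw [← C_pow, Complex.I_sq]; simp
    linear_combination h
  have hA := pow_pred (X + C Complex.I) m
  have hB := pow_pred (X - C Complex.I) n
  have key : (1 + X^2) * derivative (Q m n) =
      (C ((m:ℂ) + n) * X - C (((m:ℂ) - n) * Complex.I)) * Q m n := by
    rw [h1, hd, Q]
    rw [C_add, C_mul, C_sub]
    linear_combination ((X - C Complex.I) * (X - C Complex.I)^n) * hA +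
      ((X + C Complex.I) * (X + C Complex.I)^m) * hB
  linear_combination key

lemma gr0 (m n : ℕ) :
    (Q m n).coeff 1 = -(((m:ℂ) - n) * Complex.I) * (Q m n).coeff 0 := by
  have E := congrArg (fun p => coeff p 0) (ode m n)
  simp [coeff_derivative, mul_coeff_zero] at E
  linear_combination E

lemma cXderiv (p : Polynomial ℂ) (k : ℕ) :
    coeff (X * derivative p) k = (k:ℂ) * coeff p k := by
  cases k with
  | zero => simp [mul_coeff_zero]
  | succ k => simp [coeff_X_mul, coeff_derivative]; ring

lemma grS (m n : ℕ) (k : ℕ) :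
    ((k:ℂ)+2) * (Q m n).coeff (k+2) =
      ((m:ℂ) + n - k) * (Q m n).coeff k
        - ((m:ℂ) - n) * Complex.I * (Q m n).coeff (k+1) := by
  have E := congrArg (fun p => coeff p (k+1)) (ode m n)
  simp only [coeff_add, coeff_sub, coeff_C_mul, coeff_X_mul, coeff_derivative,
    cXderiv] at E
  push_cast at E
  linear_combination E

end Stmt14Aux

/-- if the coefficients `β_0,…,β_l` (with `β_{−1} = β_{l+1} = 0`)
satisfy `−(l−k+1) β_{k−1} + (m−n) i β_k + (k+1) β_{k+1} = 0` for all `0 ≤ k ≤ l`,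
where `l = m + n`, then `∑_{k=0}^{l} β_k x^k y^{l−k} = c (x+iy)^m (x−iy)^n`
for some constant `c`. -/
theorem stmt14 (m n : ℕ) (l : ℕ) (hl : l = m + n) (β : ℤ → ℂ)
    (hβneg : β (-1) = 0) (hβtop : β ((l : ℤ) + 1) = 0)
    (hrec : ∀ k : ℕ, k ≤ l →
      -((l : ℂ) - (k : ℂ) + 1) * β ((k : ℤ) - 1) +
        ((m : ℂ) - (n : ℂ)) * Complex.I * β (k : ℤ) +
        ((k : ℂ) + 1) * β ((k : ℤ) + 1) = 0) :
    ∃ c : ℂ, ∀ x y : ℝ,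
      ∑ k ∈ Finset.range (l + 1), β (k : ℤ) * (x : ℂ) ^ k * (y : ℂ) ^ (l - k) =
        c * ((x : ℂ) + (y : ℂ) * Complex.I) ^ m * ((x : ℂ) - (y : ℂ) * Complex.I) ^ n := by
  subst hl
  set Qp := Stmt14Aux.Q m n with hQp
  have h0ne : Qp.coeff 0 ≠ 0 := Stmt14Aux.coeff0_ne m n
  set c : ℂ := β 0 / Qp.coeff 0 with hc
  refine ⟨c, ?_⟩
  have hβ0 : β 0 = c * Qp.coeff 0 := by
    rw [hc]; field_simp
  have hβ1 : β 1 = c * Qp.coeff 1 := by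
    have h := hrec 0 (Nat.zero_le _)
    norm_num [hβneg] at h
    have hgr0 : Qp.coeff 1 = -(((m:ℂ) - n) * Complex.I) * Qp.coeff 0 := by
      rw [hQp]; exact Stmt14Aux.gr0 m n
    linear_combination h - ((m:ℂ)-n)*Complex.I*hβ0 - c * hgr0
  have key : ∀ k : ℕ, k ≤ m + n →
      β (k : ℤ) = c * Qp.coeff k ∧ β ((k : ℤ) + 1) = c * Qp.coeff (k+1) := by
    intro k
    induction k with
    | zero =>
      intro _
      constructor
      · simpa using hβ0
      · simpa using hβ1
    | succ k ih =>
      intro h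
      obtain ⟨h1, h2⟩ := ih (Nat.le_of_succ_le h)
      have hr := hrec (k+1) h
      push_cast at hr
      simp only [add_sub_cancel_right] at hr
      have hg := Stmt14Aux.grS m n k
      rw [← hQp] at hg
      have hk2 : ((k:ℂ)+2) ≠ 0 := by
        have h' : ((k + 2 : ℕ) : ℂ) ≠ 0 := Nat.cast_ne_zero.mpr (by omega)
        push_cast at h'; exact h'
      have hmain : ((k:ℂ)+2) * β ((k:ℤ) + 1 + 1) = ((k:ℂ)+2) * (c * Qp.coeff (k+2)) := by
        linear_combination hr - c * hg + ((m:ℂ) + n - k) * h1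
          - ((m:ℂ) - n) * Complex.I * h2
      have := mul_left_cancel₀ hk2 hmain
      constructor
      · push_cast
        exact h2
      · push_cast
        exact this
  intro x y
  have hcoef : ∀ k ∈ Finset.range (m + n + 1), β (k : ℤ) = c * Qp.coeff k := by
    intro k hk
    exact (key k (by simpa [Nat.lt_succ_iff] using hk)).1
  have step1 : ∑ k ∈ Finset.range (m + n + 1), β (k : ℤ) * (x : ℂ) ^ k * (y : ℂ) ^ (m + n - k)
      = c * ∑ k ∈ Finset.range (m + n + 1), Qp.coeff k * (x : ℂ) ^ k * (y : ℂ) ^ (m + n - k) := by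
    rw [Finset.mul_sum]
    refine Finset.sum_congr rfl fun k hk => ?_
    rw [hcoef k hk]; ring
  rw [step1]
  have hmain : ∑ k ∈ Finset.range (m + n + 1), Qp.coeff k * (x : ℂ) ^ k * (y : ℂ) ^ (m + n - k)
      = ((x : ℂ) + (y : ℂ) * Complex.I) ^ m * ((x : ℂ) - (y : ℂ) * Complex.I) ^ n := by
    by_cases hy : (y : ℂ) = 0
    · rw [hy]
      rw [Finset.sum_eq_single_of_mem (m + n) (Finset.self_mem_range_succ _)]
      · have hcl : Qp.coeff (m + n) = 1 := by
          have := (Stmt14Aux.monic_Q m n).coeff_natDegree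
          rwa [Stmt14Aux.natDegree_Q] at this
        simp [hcl, pow_add]
      · intro k hk hkne
        have : m + n - k ≠ 0 := by
          simp only [Finset.mem_range, Nat.lt_succ_iff] at hk
          omega
        simp [zero_pow this]
    · have hdeg : Qp.natDegree < m + n + 1 := by
        rw [hQp, Stmt14Aux.natDegree_Q]; omega
      have hev := Polynomial.eval_eq_sum_range' hdeg ((x : ℂ) / y)
      have hyx : (y : ℂ) * ((x : ℂ) / y + Complex.I) = (x : ℂ) + y * Complex.I := by
        field_simp
      have hyx' : (y : ℂ) * ((x : ℂ) / y - Complex.I) = (x : ℂ) - y * Complex.I := by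
        field_simp
      calc ∑ k ∈ Finset.range (m + n + 1), Qp.coeff k * (x : ℂ) ^ k * (y : ℂ) ^ (m + n - k)
          = (y : ℂ) ^ (m + n) * ∑ k ∈ Finset.range (m + n + 1), Qp.coeff k * ((x : ℂ) / y) ^ k := by
            rw [Finset.mul_sum]
            refine Finset.sum_congr rfl fun k hk => ?_
            simp only [Finset.mem_range, Nat.lt_succ_iff] at hk
            rw [show (y : ℂ) ^ (m + n) = y ^ (m + n - k) * y ^ k by
              rw [← pow_add]; congr 1; omega]
            rw [div_pow]
            field_simp
        _ = (y : ℂ) ^ (m + n) * Qp.eval ((x : ℂ) / y) := by rw [hev]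
        _ = ((y : ℂ) * ((x : ℂ) / y + Complex.I)) ^ m *
              ((y : ℂ) * ((x : ℂ) / y - Complex.I)) ^ n := by
            simp only [hQp, Stmt14Aux.Q, Polynomial.eval_mul, Polynomial.eval_pow,
              Polynomial.eval_add, Polynomial.eval_sub, Polynomial.eval_X, Polynomial.eval_C]
            rw [mul_pow, mul_pow, pow_add]
            ring
        _ = ((x : ℂ) + (y : ℂ) * Complex.I) ^ m * ((x : ℂ) - (y : ℂ) * Complex.I) ^ n := by
            rw [hyx, hyx']
  rw [hmain]; ring

end
end

section
/- Let r > 0, σ² > 0, Ω ∈ ℝ, ρ := 2σ²/r, m, n ∈ ℕ and t > 0. Then for every z ∈ ℂ, the Kolmogorov representation of the Ornstein–Uhlenbeck semigroup acts on the Hermite–Laguerre–Ito polynomials by (1/(πρ(1 − e^{−2rt}))) ∫_{ℝ²} exp(−(u² + v²)/(ρ(1 − e^{−2rt}))) · J_{m,n}(e^{−(r+iΩ)t} z − (u + iv), ρ) du dv = e^{−((m+n) r + i (m−n) Ω) t} · J_{m,n}(z, ρ). -/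
open MeasureTheory Complex Finset

noncomputable section

namespace Stmt16Aux

lemma angular (d : ℤ) :
    (∫ θ in Set.Ioo (-Real.pi) Real.pi, Complex.exp (d * θ * Complex.I))
      = if d = 0 then (2 * Real.pi : ℂ) else 0 := by
  have hle : -Real.pi ≤ Real.pi := by linarith [Real.pi_pos]
  rw [← integral_Ioc_eq_integral_Ioo, ← intervalIntegral.integral_of_le hle]
  rcases eq_or_ne d 0 with rfl | hd
  · simp [intervalIntegral.integral_const]
    push_cast
    ring
  · have hc : (d : ℂ) * Complex.I ≠ 0 := by
      simp [Complex.I_ne_zero, Int.cast_eq_zero, hd]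
    have : ∀ θ : ℝ, (d : ℂ) * θ * Complex.I = ((d : ℂ) * Complex.I) * θ := fun θ => by ring
    simp_rw [this]
    rw [integral_exp_mul_complex hc]
    have h2 : (d : ℂ) * Complex.I * (-Real.pi : ℝ)
        = (d : ℂ) * Complex.I * (Real.pi : ℝ) + (-d : ℤ) * (2 * Real.pi * Complex.I) := by
      push_cast; ring
    rw [if_neg hd, h2, Complex.exp_add, Complex.exp_int_mul_two_pi_mul_I, mul_one, sub_self,
      zero_div]

lemma radial {s : ℝ} (hs : 0 < s) (j : ℕ) :
    ∫ x in Set.Ioi (0:ℝ), x ^ (2*j+1) * Real.exp (-x^2/s)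
      = (j.factorial * s^(j+1)) / 2 := by
  have h := _root_.integral_rpow_mul_exp_neg_mul_rpow (p := 2) (q := (2*j+1 : ℕ)) (b := 1/s)
    two_pos (by have : (0:ℝ) ≤ ((2*j+1:ℕ):ℝ) := Nat.cast_nonneg _; linarith) (by positivity)
  have hcongr : ∀ x : ℝ, x ^ ((2*j+1 : ℕ) : ℝ) * Real.exp (-(1/s) * x ^ (2:ℝ))
      = x ^ (2*j+1) * Real.exp (-x^2/s) := by
    intro x
    rw [Real.rpow_natCast, show (2:ℝ) = ((2:ℕ):ℝ) by norm_num, Real.rpow_natCast]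
    congr 1
    field_simp
  rw [MeasureTheory.setIntegral_congr_fun measurableSet_Ioi (fun x _ => hcongr x)] at h
  rw [h]
  have h1 : (-(((2*j+1:ℕ):ℝ) + 1) / 2) = -((j:ℝ)+1) := by push_cast; ring
  have h2 : ((((2*j+1:ℕ):ℝ)) + 1) / 2 = (j:ℝ) + 1 := by push_cast; ring
  rw [h1, h2, Real.Gamma_nat_eq_factorial j]
  rw [one_div, ← Real.rpow_neg_one, ← Real.rpow_mul hs.le,
    show (-1 * -((j:ℝ)+1)) = (((j+1:ℕ)):ℝ) by push_cast; ring, Real.rpow_natCast]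
  ring

lemma moment {s : ℝ} (hs : 0 < s) (j k : ℕ) :
    (∫ p : ℝ × ℝ, ((Real.exp (-(p.1^2+p.2^2)/s) : ℝ):ℂ) * ((p.1:ℂ) + (p.2:ℂ)*Complex.I)^j *
      (starRingEnd ℂ ((p.1:ℂ) + (p.2:ℂ)*Complex.I))^k)
    = if j = k then (Real.pi : ℂ) * j.factorial * (s:ℂ)^(j+1) else 0 := by
  rw [← integral_comp_polarCoord_symm]
  set d : ℤ := (j:ℤ) - (k:ℤ) with hd
  have hdc : ((d:ℂ)) = (j:ℂ) - (k:ℂ) := by push_cast [hd]; ring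
  have step : (∫ p in polarCoord.target,
        p.1 • (((Real.exp (-((polarCoord.symm p).1^2+(polarCoord.symm p).2^2)/s) : ℝ):ℂ)
          * (((polarCoord.symm p).1:ℂ) + ((polarCoord.symm p).2:ℂ)*Complex.I)^j
          * (starRingEnd ℂ (((polarCoord.symm p).1:ℂ) + ((polarCoord.symm p).2:ℂ)*Complex.I))^k))
      = ∫ p in Set.Ioi (0:ℝ) ×ˢ Set.Ioo (-Real.pi) Real.pi,
          (fun x : ℝ => ((x^(j+k+1) * Real.exp (-x^2/s) : ℝ):ℂ)) p.1
            * (fun θ : ℝ => Complex.exp (d * θ * Complex.I)) p.2 := by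
    rw [show polarCoord.target = Set.Ioi (0:ℝ) ×ˢ Set.Ioo (-Real.pi) Real.pi from rfl]
    refine setIntegral_congr_fun (measurableSet_Ioi.prod measurableSet_Ioo) (fun p _ => ?_)
    obtain ⟨x, θ⟩ := p
    simp only [polarCoord_symm_apply]
    have hxθ : ((x*Real.cos θ : ℝ):ℂ) + ((x*Real.sin θ : ℝ):ℂ)*Complex.I
        = (x:ℂ) * Complex.exp ((θ:ℝ)*Complex.I) := by
      rw [Complex.exp_mul_I]; push_cast; ring
    have hconj : starRingEnd ℂ ((x:ℂ) * Complex.exp ((θ:ℝ)*Complex.I))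
        = (x:ℂ) * Complex.exp (-((θ:ℝ)*Complex.I)) := by
      rw [map_mul, Complex.conj_ofReal, ← Complex.exp_conj, map_mul, Complex.conj_ofReal,
        Complex.conj_I, mul_neg]
    have hR : (x*Real.cos θ)^2 + (x*Real.sin θ)^2 = x^2 := by
      rw [mul_pow, mul_pow, ← mul_add, Real.cos_sq_add_sin_sq, mul_one]
    have e1 : Complex.exp ((θ:ℝ)*Complex.I)^j = Complex.exp ((j:ℂ)*((θ:ℝ)*Complex.I)) :=
      (Complex.exp_nat_mul _ j).symm
    have e2 : Complex.exp (-((θ:ℝ)*Complex.I))^k = Complex.exp ((k:ℂ)*(-((θ:ℝ)*Complex.I))) :=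
      (Complex.exp_nat_mul _ k).symm
    have e3 : Complex.exp ((j:ℂ)*((θ:ℝ)*Complex.I)) * Complex.exp ((k:ℂ)*(-((θ:ℝ)*Complex.I)))
        = Complex.exp ((d:ℂ) * (θ:ℝ) * Complex.I) := by
      rw [← Complex.exp_add]; congr 1; rw [hdc]; ring
    simp only [Complex.real_smul, hR, hxθ, hconj]
    calc (x:ℂ) * (((Real.exp (-x^2/s) : ℝ):ℂ)
          * ((x:ℂ) * Complex.exp ((θ:ℝ)*Complex.I))^j
          * ((x:ℂ) * Complex.exp (-((θ:ℝ)*Complex.I)))^k)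
        = ((x:ℂ)^(j+k+1) * ((Real.exp (-x^2/s) : ℝ):ℂ))
            * (Complex.exp ((j:ℂ)*((θ:ℝ)*Complex.I)) * Complex.exp ((k:ℂ)*(-((θ:ℝ)*Complex.I)))) := by
          rw [mul_pow, mul_pow, e1, e2]; ring
      _ = ((x^(j+k+1) * Real.exp (-x^2/s) : ℝ):ℂ) * Complex.exp ((d:ℂ) * (θ:ℝ) * Complex.I) := by
          rw [e3]; push_cast; ring
  rw [step, MeasureTheory.Measure.volume_eq_prod,
    setIntegral_prod_mul (fun x : ℝ => ((x^(j+k+1) * Real.exp (-x^2/s) : ℝ):ℂ))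
      (fun θ : ℝ => Complex.exp (d * θ * Complex.I)) (Set.Ioi (0:ℝ))
      (Set.Ioo (-Real.pi) Real.pi)]
  rw [show (∫ x in Set.Ioi (0:ℝ), ((x^(j+k+1) * Real.exp (-x^2/s) : ℝ):ℂ))
      = ((∫ x in Set.Ioi (0:ℝ), (x^(j+k+1) * Real.exp (-x^2/s) : ℝ) : ℝ):ℂ) from
    integral_ofReal, angular d]
  rcases eq_or_ne j k with rfl | hjk
  · rw [if_pos rfl, if_pos (by omega : d = 0)]
    rw [show j + j + 1 = 2*j+1 by ring, radial hs j]
    push_cast; ring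
  · rw [if_neg hjk, if_neg (by omega : d ≠ 0), mul_zero]

lemma gauss2d_integrable {a : ℝ} (ha : 0 < a) :
    Integrable (fun p : ℝ × ℝ => Real.exp (-(p.1^2+p.2^2)/a)) := by
  have h : (fun p : ℝ × ℝ => Real.exp (-(p.1^2+p.2^2)/a))
      = fun p : ℝ × ℝ => (fun u : ℝ => Real.exp (-(1/a)*u^2)) p.1
          * (fun v : ℝ => Real.exp (-(1/a)*v^2)) p.2 := by
    funext p
    rw [← Real.exp_add]
    congr 1
    field_simp
    ring
  rw [h, MeasureTheory.Measure.volume_eq_prod]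
  exact (integrable_exp_neg_mul_sq (by positivity)).mul_prod
    (integrable_exp_neg_mul_sq (by positivity))

lemma sqrtpow_le {y : ℝ} (hy : 0 ≤ y) (N : ℕ) : (Real.sqrt y)^N ≤ 1 + y^N := by
  rcases le_total (Real.sqrt y) 1 with h | h
  · have := pow_le_one₀ (Real.sqrt_nonneg y) h (n := N)
    nlinarith [pow_nonneg hy N]
  · have h1 : (Real.sqrt y)^N ≤ (Real.sqrt y)^(2*N) :=
      pow_le_pow_right₀ h (by omega)
    have h2 : (Real.sqrt y)^(2*N) = y^N := by
      rw [pow_mul, Real.sq_sqrt hy]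
    nlinarith
  
lemma pow_le_exp_aux {x : ℝ} (hx : 0 ≤ x) (N : ℕ) : x^N ≤ N.factorial * Real.exp x := by
  have h1 : x^N / N.factorial ≤ ∑ i ∈ Finset.range (N+1), x^i / i.factorial := by
    refine Finset.single_le_sum (f := fun i => x^i / i.factorial) ?_ (Finset.self_mem_range_succ N)
    intro i _
    positivity
  have h2 := Real.sum_le_exp_of_nonneg hx (N+1)
  have h3 : (0:ℝ) < N.factorial := by positivity
  rw [div_le_iff₀ h3] at *
  nlinarith [h1, h2]

lemma integrable_monomial {s : ℝ} (hs : 0 < s) (j k : ℕ) :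
    Integrable (fun p : ℝ × ℝ => ((Real.exp (-(p.1^2+p.2^2)/s) : ℝ):ℂ)
      * ((p.1:ℂ) + (p.2:ℂ)*Complex.I)^j
      * (starRingEnd ℂ ((p.1:ℂ) + (p.2:ℂ)*Complex.I))^k) := by
  set N := j + k with hN
  have hg : Integrable (fun p : ℝ × ℝ => Real.exp (-(p.1^2+p.2^2)/s)
      + (N.factorial * (2*s)^N) * Real.exp (-(p.1^2+p.2^2)/(2*s))) :=
    (gauss2d_integrable hs).add ((gauss2d_integrable (by positivity)).const_mul _)
  refine Integrable.mono' hg ?_ (Filter.Eventually.of_forall fun p => ?_)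
  · apply Continuous.aestronglyMeasurable
    have hc : (fun p : ℝ × ℝ => ((Real.exp (-(p.1^2+p.2^2)/s) : ℝ):ℂ)
        * ((p.1:ℂ) + (p.2:ℂ)*Complex.I)^j
        * (starRingEnd ℂ ((p.1:ℂ) + (p.2:ℂ)*Complex.I))^k)
        = fun p : ℝ × ℝ => ((Real.exp (-(p.1^2+p.2^2)/s) : ℝ):ℂ)
        * ((p.1:ℂ) + (p.2:ℂ)*Complex.I)^j
        * ((p.1:ℂ) - (p.2:ℂ)*Complex.I)^k := by
      funext p
      rw [map_add, map_mul, Complex.conj_ofReal, Complex.conj_ofReal, Complex.conj_I]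
      ring
    rw [hc]
    fun_prop
  · set y := p.1^2 + p.2^2 with hy
    have hy0 : 0 ≤ y := by positivity
    have habs : ‖((p.1:ℂ) + (p.2:ℂ)*Complex.I)‖ = Real.sqrt y := by
      rw [Complex.norm_def, Complex.normSq_add_mul_I]
    have hnorm : ‖((Real.exp (-y/s) : ℝ):ℂ)
        * ((p.1:ℂ) + (p.2:ℂ)*Complex.I)^j
        * (starRingEnd ℂ ((p.1:ℂ) + (p.2:ℂ)*Complex.I))^k‖
        = Real.exp (-y/s) * (Real.sqrt y)^N := by
      simp only [norm_mul, norm_pow, map_pow, Complex.norm_conj,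
        Complex.norm_real, Real.norm_eq_abs, habs, Real.abs_exp]
      rw [mul_assoc, ← pow_add]
    rw [hnorm]
    have b1 : (Real.sqrt y)^N ≤ 1 + y^N := sqrtpow_le hy0 N
    have b2 : y^N ≤ N.factorial * (2*s)^N * Real.exp (y/(2*s)) := by
      have h := pow_le_exp_aux (x := y/(2*s)) (by positivity) N
      have h2 : (y/(2*s))^N * (2*s)^N = y^N := by
        rw [div_pow, div_mul_cancel₀]
        positivity
      nlinarith [pow_pos (show (0:ℝ) < 2*s by linarith) N, Real.exp_pos (y/(2*s))]
    have hkey : Real.exp (-y/s) * Real.exp (y/(2*s)) = Real.exp (-y/(2*s)) := by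
      rw [← Real.exp_add]
      congr 1
      field_simp
      ring
    have hE := Real.exp_pos (-y/s)
    calc Real.exp (-y/s) * (Real.sqrt y)^N
        ≤ Real.exp (-y/s) * (1 + N.factorial * (2*s)^N * Real.exp (y/(2*s))) := by
          nlinarith [b1, b2]
      _ = Real.exp (-y/s)
          + (N.factorial * (2*s)^N) * (Real.exp (-y/s) * Real.exp (y/(2*s))) := by ring
      _ = Real.exp (-y/s) + (N.factorial * (2*s)^N) * Real.exp (-y/(2*s)) := by rw [hkey]

lemma pt_expand (Gc X Y A B : ℂ) (M N : ℕ) :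
    Gc * (A - X)^M * (B - Y)^N
      = ∑ j ∈ Finset.range (M+1), ∑ k ∈ Finset.range (N+1),
          ((M.choose j : ℂ) * (-1)^j * A^(M-j) * (N.choose k : ℂ) * (-1)^k * B^(N-k))
            * (Gc * X^j * Y^k) := by
  rw [show A - X = -X + A by ring, show B - Y = -Y + B by ring, add_pow, add_pow, mul_assoc,
    Finset.sum_mul_sum, Finset.mul_sum]
  refine Finset.sum_congr rfl fun j _ => ?_
  rw [Finset.mul_sum]
  refine Finset.sum_congr rfl fun k _ => ?_
  rw [neg_pow X, neg_pow Y]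
  ring

lemma key_integrable {s : ℝ} (hs : 0 < s) (A B : ℂ) (M N : ℕ) :
    Integrable (fun p : ℝ × ℝ => ((Real.exp (-(p.1^2+p.2^2)/s) : ℝ):ℂ)
      * (A - ((p.1:ℂ) + (p.2:ℂ)*Complex.I))^M
      * (B - starRingEnd ℂ ((p.1:ℂ) + (p.2:ℂ)*Complex.I))^N) := by
  have h : (fun p : ℝ × ℝ => ((Real.exp (-(p.1^2+p.2^2)/s) : ℝ):ℂ)
      * (A - ((p.1:ℂ) + (p.2:ℂ)*Complex.I))^M
      * (B - starRingEnd ℂ ((p.1:ℂ) + (p.2:ℂ)*Complex.I))^N)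
      = fun p : ℝ × ℝ => ∑ j ∈ Finset.range (M+1), ∑ k ∈ Finset.range (N+1),
          ((M.choose j : ℂ) * (-1)^j * A^(M-j) * (N.choose k : ℂ) * (-1)^k * B^(N-k))
            * (((Real.exp (-(p.1^2+p.2^2)/s) : ℝ):ℂ) * ((p.1:ℂ) + (p.2:ℂ)*Complex.I)^j
              * (starRingEnd ℂ ((p.1:ℂ) + (p.2:ℂ)*Complex.I))^k) :=
    funext fun p => pt_expand _ _ _ _ _ _ _
  rw [h]
  refine integrable_finset_sum _ fun j _ => integrable_finset_sum _ fun k _ => ?_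
  exact (integrable_monomial hs j k).const_mul _

lemma range_inter (M N : ℕ) :
    Finset.range (M+1) ∩ Finset.range (N+1) = Finset.range (min M N + 1) := by
  ext x
  simp only [Finset.mem_inter, Finset.mem_range]
  omega

lemma key_integral {s : ℝ} (hs : 0 < s) (A B : ℂ) (M N : ℕ) :
    (∫ p : ℝ × ℝ, ((Real.exp (-(p.1^2+p.2^2)/s) : ℝ):ℂ)
      * (A - ((p.1:ℂ) + (p.2:ℂ)*Complex.I))^M
      * (B - starRingEnd ℂ ((p.1:ℂ) + (p.2:ℂ)*Complex.I))^N)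
      = (Real.pi : ℂ) * (s:ℂ) * ∑ j ∈ Finset.range (min M N + 1),
          (M.choose j : ℂ) * (N.choose j : ℂ) * (j.factorial : ℂ) * (s:ℂ)^j
            * A^(M-j) * B^(N-j) := by
  have hfun : ∀ p : ℝ × ℝ, ((Real.exp (-(p.1^2+p.2^2)/s) : ℝ):ℂ)
      * (A - ((p.1:ℂ) + (p.2:ℂ)*Complex.I))^M
      * (B - starRingEnd ℂ ((p.1:ℂ) + (p.2:ℂ)*Complex.I))^N
      = ∑ j ∈ Finset.range (M+1), ∑ k ∈ Finset.range (N+1),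
          ((M.choose j : ℂ) * (-1)^j * A^(M-j) * (N.choose k : ℂ) * (-1)^k * B^(N-k))
            * (((Real.exp (-(p.1^2+p.2^2)/s) : ℝ):ℂ) * ((p.1:ℂ) + (p.2:ℂ)*Complex.I)^j
              * (starRingEnd ℂ ((p.1:ℂ) + (p.2:ℂ)*Complex.I))^k) :=
    fun p => pt_expand _ _ _ _ _ _ _
  simp only [hfun]
  rw [integral_finset_sum _ fun j _ => integrable_finset_sum _ fun k _ =>
    (integrable_monomial hs j k).const_mul _]
  have hswap : ∀ j : ℕ, (∫ p : ℝ × ℝ, ∑ k ∈ Finset.range (N+1),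
      ((M.choose j : ℂ) * (-1)^j * A^(M-j) * (N.choose k : ℂ) * (-1)^k * B^(N-k))
        * (((Real.exp (-(p.1^2+p.2^2)/s) : ℝ):ℂ) * ((p.1:ℂ) + (p.2:ℂ)*Complex.I)^j
          * (starRingEnd ℂ ((p.1:ℂ) + (p.2:ℂ)*Complex.I))^k))
      = ∑ k ∈ Finset.range (N+1), if j = k then
          ((M.choose j : ℂ) * (-1)^j * A^(M-j) * (N.choose k : ℂ) * (-1)^k * B^(N-k))
            * ((Real.pi : ℂ) * j.factorial * (s:ℂ)^(j+1)) else 0 := by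
    intro j
    rw [integral_finset_sum _ fun k _ => (integrable_monomial hs j k).const_mul _]
    refine Finset.sum_congr rfl fun k _ => ?_
    rw [MeasureTheory.integral_const_mul, moment hs j k, mul_ite, mul_zero]
  simp only [hswap]
  simp only [Finset.sum_ite_eq, Finset.mem_range]
  have hite : ∀ j : ℕ, (if j < N + 1 then
        ((M.choose j : ℂ) * (-1)^j * A^(M-j) * (N.choose j : ℂ) * (-1)^j * B^(N-j))
          * ((Real.pi : ℂ) * j.factorial * (s:ℂ)^(j+1)) else 0)
      = if j ∈ Finset.range (N+1) then
        ((M.choose j : ℂ) * (-1)^j * A^(M-j) * (N.choose j : ℂ) * (-1)^j * B^(N-j))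
          * ((Real.pi : ℂ) * j.factorial * (s:ℂ)^(j+1)) else 0 := by
    intro j; simp [Finset.mem_range]
  simp only [hite]
  rw [Finset.sum_ite_mem, range_inter, Finset.mul_sum]
  refine Finset.sum_congr rfl fun j _ => ?_
  have hsign : ((-1:ℂ))^j * (-1)^j = 1 := by rw [← mul_pow]; norm_num
  linear_combination ((M.choose j : ℂ) * A^(M-j) * (N.choose j : ℂ) * B^(N-j)
    * (Real.pi : ℂ) * (j.factorial : ℂ) * (s:ℂ)^j * (s:ℂ)) * hsign

lemma triangle {M : Type*} [AddCommMonoid M] (K : ℕ) (f : ℕ → ℕ → M) :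
    ∑ a ∈ Finset.range (K+1), ∑ j ∈ Finset.range (K-a+1), f a j
      = ∑ b ∈ Finset.range (K+1), ∑ a ∈ Finset.range (b+1), f a (b-a) := by
  rw [Finset.sum_sigma', Finset.sum_sigma']
  refine Finset.sum_nbij' (fun x => ⟨x.1 + x.2, x.1⟩) (fun x => ⟨x.2, x.1 - x.2⟩)
    ?_ ?_ ?_ ?_ ?_
  · rintro ⟨a, j⟩ h
    simp only [Finset.mem_sigma, Finset.mem_range] at h ⊢
    omega
  · rintro ⟨b, a⟩ h
    simp only [Finset.mem_sigma, Finset.mem_range] at h ⊢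
    omega
  · rintro ⟨a, j⟩ h
    simp
  · rintro ⟨b, a⟩ h
    simp only [Finset.mem_sigma, Finset.mem_range] at h
    have hba : a + (b - a) = b := by omega
    simp [hba]
  · rintro ⟨a, j⟩ h
    simp

lemma nat_comb {m n b a : ℕ} (hab : a ≤ b) (hbm : b ≤ m) (hbn : b ≤ n) :
    a.factorial * (b-a).factorial * (m.choose a * (m-a).choose (b-a))
      * (n.choose a * (n-a).choose (b-a))
      = b.factorial * m.choose b * n.choose b * b.choose a := by
  rw [← Nat.choose_mul (n := m) hab, ← Nat.choose_mul (n := n) hab,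
    ← Nat.choose_mul_factorial_mul_factorial hab]
  ring

end Stmt16Aux

open Stmt16Aux

/-- the Kolmogorov representation of the Ornstein–Uhlenbeck
semigroup acts on the Hermite–Laguerre–Ito polynomials as multiplication by
`e^{−((m+n)r + i(m−n)Ω)t}`. -/
theorem stmt16 (r σ2 Ω : ℝ) (hr : 0 < r) (hσ : 0 < σ2) (t : ℝ) (ht : 0 < t)
    (m n : ℕ) (z : ℂ) :
    (((Real.pi * (2 * σ2 / r) * (1 - Real.exp (-2 * r * t)))⁻¹ : ℝ) : ℂ) *
      ∫ p : ℝ × ℝ,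
        ((Real.exp (-(p.1 ^ 2 + p.2 ^ 2) / ((2 * σ2 / r) * (1 - Real.exp (-2 * r * t)))) : ℝ) : ℂ) *
          HLI m n (Complex.exp (-((r : ℂ) + Complex.I * (Ω : ℂ)) * (t : ℂ)) * z -
            ((p.1 : ℂ) + (p.2 : ℂ) * Complex.I)) (2 * σ2 / r) =
      Complex.exp (-((((m : ℂ) + (n : ℂ)) * (r : ℂ)) +
          Complex.I * (((m : ℂ) - (n : ℂ)) * (Ω : ℂ))) * (t : ℂ)) *
        HLI m n z (2 * σ2 / r) := by
  set ρ : ℝ := 2 * σ2 / r with hρdef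
  have hρ : 0 < ρ := by positivity
  set q : ℝ := Real.exp (-2 * r * t) with hqdef
  have hq0 : 0 < q := Real.exp_pos _
  have hq1 : q < 1 := by
    rw [hqdef, Real.exp_lt_one_iff]
    nlinarith
  set s : ℝ := ρ * (1 - q) with hsdef
  have hs : 0 < s := mul_pos hρ (by linarith)
  set c : ℂ := Complex.exp (-((r : ℂ) + Complex.I * (Ω : ℂ)) * (t : ℂ)) with hcdef
  set K : ℕ := min m n with hKdef
  have hcc : starRingEnd ℂ c = Complex.exp (-((r:ℂ) - Complex.I * (Ω:ℂ)) * (t:ℂ)) := by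
    rw [hcdef, ← Complex.exp_conj, map_mul, map_neg, map_add, map_mul, Complex.conj_ofReal,
      Complex.conj_ofReal, Complex.conj_I, Complex.conj_ofReal]
    ring_nf
  have hcq : c * starRingEnd ℂ c = (q:ℂ) := by
    rw [hcc, hcdef, ← Complex.exp_add, hqdef, Complex.ofReal_exp]
    congr 1
    push_cast
    ring
  have hE : Complex.exp (-((((m : ℂ) + (n : ℂ)) * (r : ℂ)) +
        Complex.I * (((m : ℂ) - (n : ℂ)) * (Ω : ℂ))) * (t : ℂ)) = c^m * (starRingEnd ℂ c)^n := by
    rw [hcc, hcdef, ← Complex.exp_nat_mul, ← Complex.exp_nat_mul, ← Complex.exp_add]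
    congr 1
    ring
  -- pointwise expansion of the integrand
  have hpt : ∀ p : ℝ × ℝ, ((Real.exp (-(p.1^2+p.2^2)/s) : ℝ):ℂ)
      * HLI m n (c * z - ((p.1:ℂ) + (p.2:ℂ)*Complex.I)) ρ
      = ∑ a ∈ Finset.range (K+1),
          ((-1:ℂ)^a * (a.factorial : ℂ) * (m.choose a : ℂ) * (n.choose a : ℂ) * (ρ:ℂ)^a)
            * (((Real.exp (-(p.1^2+p.2^2)/s) : ℝ):ℂ)
              * ((c*z) - ((p.1:ℂ)+(p.2:ℂ)*Complex.I))^(m-a)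
              * ((starRingEnd ℂ (c*z)) - starRingEnd ℂ ((p.1:ℂ)+(p.2:ℂ)*Complex.I))^(n-a)) := by
    intro p
    rw [HLI, Finset.mul_sum]
    refine Finset.sum_congr rfl fun a _ => ?_
    rw [map_sub]
    ring
  simp only [hpt]
  rw [integral_finset_sum _ fun a _ =>
    ((key_integrable hs (c*z) (starRingEnd ℂ (c*z)) (m-a) (n-a)).const_mul _)]
  simp only [MeasureTheory.integral_const_mul]
  simp only [key_integral hs]
  have hmin : ∀ a : ℕ, min (m-a) (n-a) = K - a := fun a => by omega
  simp only [hmin]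
  have hconst : (((Real.pi * ρ * (1-q))⁻¹ : ℝ):ℂ) * ((Real.pi:ℂ) * (s:ℝ)) = 1 := by
    rw [hsdef]
    push_cast
    have h1q : (1:ℂ) - (q:ℂ) = ((1 - q : ℝ):ℂ) := by push_cast; ring
    have hne : (Real.pi:ℂ) * (ρ:ℂ) * (1-(q:ℂ)) ≠ 0 := by
      refine mul_ne_zero (mul_ne_zero ?_ ?_) ?_
      · exact Complex.ofReal_ne_zero.mpr Real.pi_ne_zero
      · exact Complex.ofReal_ne_zero.mpr hρ.ne'
      · rw [h1q]; exact Complex.ofReal_ne_zero.mpr (by linarith)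
    rw [show (Real.pi:ℂ) * ((ρ:ℂ)*(1-(q:ℂ))) = (Real.pi:ℂ)*(ρ:ℂ)*(1-(q:ℂ)) by ring,
      inv_mul_cancel₀ hne]
  rw [Finset.mul_sum]
  have step1 : ∀ a : ℕ,
      (((Real.pi * ρ * (1-q))⁻¹ : ℝ):ℂ) *
        ((-1:ℂ)^a * (a.factorial:ℂ) * (m.choose a:ℂ) * (n.choose a:ℂ) * (ρ:ℂ)^a *
          ((Real.pi:ℂ) * (s:ℂ) *
            ∑ j ∈ Finset.range (K-a+1),
              ((m-a).choose j:ℂ) * ((n-a).choose j:ℂ) * (j.factorial:ℂ) * (s:ℂ)^j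
                * (c*z)^(m-a-j) * (starRingEnd ℂ (c*z))^(n-a-j)))
      = ∑ j ∈ Finset.range (K-a+1),
          ((-1:ℂ)^a * (a.factorial:ℂ) * (m.choose a:ℂ) * (n.choose a:ℂ) * (ρ:ℂ)^a)
            * (((m-a).choose j:ℂ) * ((n-a).choose j:ℂ) * (j.factorial:ℂ) * (s:ℂ)^j
                * (c*z)^(m-a-j) * (starRingEnd ℂ (c*z))^(n-a-j)) := by
    intro a
    calc (((Real.pi * ρ * (1-q))⁻¹ : ℝ):ℂ) *
        ((-1:ℂ)^a * (a.factorial:ℂ) * (m.choose a:ℂ) * (n.choose a:ℂ) * (ρ:ℂ)^a *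
          ((Real.pi:ℂ) * (s:ℂ) * ∑ j ∈ Finset.range (K-a+1),
              ((m-a).choose j:ℂ) * ((n-a).choose j:ℂ) * (j.factorial:ℂ) * (s:ℂ)^j
                * (c*z)^(m-a-j) * (starRingEnd ℂ (c*z))^(n-a-j)))
        = ((((Real.pi * ρ * (1-q))⁻¹ : ℝ):ℂ) * ((Real.pi:ℂ) * (s:ℂ))) *
            (((-1:ℂ)^a * (a.factorial:ℂ) * (m.choose a:ℂ) * (n.choose a:ℂ) * (ρ:ℂ)^a) *
              ∑ j ∈ Finset.range (K-a+1),
                ((m-a).choose j:ℂ) * ((n-a).choose j:ℂ) * (j.factorial:ℂ) * (s:ℂ)^j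
                  * (c*z)^(m-a-j) * (starRingEnd ℂ (c*z))^(n-a-j)) := by ring
      _ = ((-1:ℂ)^a * (a.factorial:ℂ) * (m.choose a:ℂ) * (n.choose a:ℂ) * (ρ:ℂ)^a) *
              ∑ j ∈ Finset.range (K-a+1),
                ((m-a).choose j:ℂ) * ((n-a).choose j:ℂ) * (j.factorial:ℂ) * (s:ℂ)^j
                  * (c*z)^(m-a-j) * (starRingEnd ℂ (c*z))^(n-a-j) := by
            rw [hconst, one_mul]
      _ = _ := Finset.mul_sum _ _ _
  rw [Finset.sum_congr rfl (fun a _ => step1 a)]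
  rw [triangle K (fun a j =>
    ((-1:ℂ)^a * (a.factorial:ℂ) * (m.choose a:ℂ) * (n.choose a:ℂ) * (ρ:ℂ)^a)
      * (((m-a).choose j:ℂ) * ((n-a).choose j:ℂ) * (j.factorial:ℂ) * (s:ℂ)^j
          * (c*z)^(m-a-j) * (starRingEnd ℂ (c*z))^(n-a-j)))]
  rw [HLI, Finset.mul_sum]
  refine Finset.sum_congr rfl fun b hb => ?_
  have hbK : b ≤ K := Nat.lt_succ_iff.mp (Finset.mem_range.mp hb)
  have hbm : b ≤ m := le_trans hbK (hKdef ▸ min_le_left m n)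
  have hbn : b ≤ n := le_trans hbK (hKdef ▸ min_le_right m n)
  have h1 : c^(m-b) * c^b = c^m := by rw [← pow_add, Nat.sub_add_cancel hbm]
  have h2 : (starRingEnd ℂ c)^(n-b) * (starRingEnd ℂ c)^b = (starRingEnd ℂ c)^n := by
    rw [← pow_add, Nat.sub_add_cancel hbn]
  have stepa : ∀ a ∈ Finset.range (b+1),
      ((-1:ℂ)^a * (a.factorial:ℂ) * (m.choose a:ℂ) * (n.choose a:ℂ) * (ρ:ℂ)^a)
        * (((m-a).choose (b-a):ℂ) * ((n-a).choose (b-a):ℂ) * ((b-a).factorial:ℂ)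
            * (s:ℂ)^(b-a) * (c*z)^(m-a-(b-a)) * (starRingEnd ℂ (c*z))^(n-a-(b-a)))
      = ((-(ρ:ℂ))^a * (s:ℂ)^(b-a) * (b.choose a:ℂ))
          * (((b.factorial:ℂ) * (m.choose b:ℂ) * (n.choose b:ℂ))
            * ((c*z)^(m-b) * (starRingEnd ℂ (c*z))^(n-b))) := by
    intro a ha
    have hab : a ≤ b := Nat.lt_succ_iff.mp (Finset.mem_range.mp ha)
    have hnatC : (a.factorial:ℂ) * ((b-a).factorial:ℂ)
        * ((m.choose a:ℂ) * ((m-a).choose (b-a):ℂ))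
        * ((n.choose a:ℂ) * ((n-a).choose (b-a):ℂ))
        = (b.factorial:ℂ) * (m.choose b:ℂ) * (n.choose b:ℂ) * (b.choose a:ℂ) := by
      exact_mod_cast congrArg (Nat.cast : ℕ → ℂ) (nat_comb hab hbm hbn)
    rw [show m-a-(b-a) = m-b from by omega, show n-a-(b-a) = n-b from by omega, neg_pow]
    linear_combination ((-1:ℂ)^a * (ρ:ℂ)^a * (s:ℂ)^(b-a)
      * ((c*z)^(m-b) * (starRingEnd ℂ (c*z))^(n-b))) * hnatC
  rw [Finset.sum_congr rfl stepa, ← Finset.sum_mul, ← add_pow]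
  have hbase : (-(ρ:ℂ) + (s:ℂ)) = -((ρ:ℂ) * (q:ℂ)) := by
    rw [hsdef]; push_cast; ring
  rw [hbase, neg_pow, mul_pow, hE, map_mul (starRingEnd ℂ) c z, ← hcq, ← h1, ← h2]
  ring

end
end

section
/- For all m, n ∈ ℕ, ρ > 0 and z ∈ ℂ, z^m · conj(z)^n = ∑_{k=0}^{min(m,n)} C(m,k) · C(n,k) · k! · ρ^k · J_{m−k, n−k}(z, ρ). -/
open Complex Finset

noncomputable section

/-- expansion of the monomial `z^m z̄^n` in the
Hermite–Laguerre–Ito polynomials. -/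
theorem stmt18 (m n : ℕ) (ρ : ℝ) (hρ : 0 < ρ) (z : ℂ) :
    z ^ m * (starRingEnd ℂ z) ^ n =
      ∑ k ∈ Finset.range (min m n + 1),
        (m.choose k : ℂ) * (n.choose k : ℂ) * (k.factorial : ℂ) * (ρ : ℂ) ^ k *
          HLI (m - k) (n - k) z ρ := by
  set N := min m n with hNdef
  set f : ℕ → ℕ → ℂ := fun k r =>
    (m.choose k : ℂ) * (n.choose k : ℂ) * (k.factorial : ℂ) * (ρ : ℂ) ^ k *
      ((-1 : ℂ) ^ r * (r.factorial : ℂ) * ((m - k).choose r : ℂ) * ((n - k).choose r : ℂ) *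
        z ^ (m - k - r) * (starRingEnd ℂ z) ^ (n - k - r) * (ρ : ℂ) ^ r) with hf
  have hstep1 :
      (∑ k ∈ Finset.range (N + 1),
        (m.choose k : ℂ) * (n.choose k : ℂ) * (k.factorial : ℂ) * (ρ : ℂ) ^ k *
          HLI (m - k) (n - k) z ρ)
        = ∑ k ∈ Finset.range (N + 1), ∑ r ∈ Finset.range (N + 1 - k), f k r := by
    refine sum_congr rfl fun k hk => ?_
    rw [mem_range] at hk
    rw [HLI, mul_sum]
    have hmin : min (m - k) (n - k) + 1 = N + 1 - k := by omega
    rw [hmin]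
  rw [hstep1, ← sum_range_diag_flip (N + 1) f]
  have hinner : ∀ s ∈ Finset.range (N + 1),
      (∑ k ∈ Finset.range (s + 1), f k (s - k))
        = if s = 0 then z ^ m * (starRingEnd ℂ z) ^ n else 0 := by
    intro s hs
    rw [mem_range] at hs
    have hsm : s ≤ m := by omega
    have hsn : s ≤ n := by omega
    have h1 : (∑ k ∈ Finset.range (s + 1), f k (s - k))
        = ((m.choose s : ℂ) * (n.choose s : ℂ) * (s.factorial : ℂ) * z ^ (m - s) *
            (starRingEnd ℂ z) ^ (n - s) * (ρ : ℂ) ^ s)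
          * ∑ k ∈ Finset.range (s + 1), (-1 : ℂ) ^ (s - k) * (s.choose k : ℂ) := by
      rw [mul_sum]
      refine sum_congr rfl fun k hk => ?_
      rw [mem_range] at hk
      have hks : k ≤ s := by omega
      have e1 : m - k - (s - k) = m - s := by omega
      have e2 : n - k - (s - k) = n - s := by omega
      have e3 : (ρ : ℂ) ^ s = (ρ : ℂ) ^ k * (ρ : ℂ) ^ (s - k) := by
        rw [← pow_add]; congr 1; omega
      have h1' : (m.choose s : ℂ) * (s.choose k : ℂ)
          = (m.choose k : ℂ) * ((m - k).choose (s - k) : ℂ) := by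
        exact_mod_cast congrArg (Nat.cast (R := ℂ)) (Nat.choose_mul hks)
      have h2' : (n.choose s : ℂ) * (s.choose k : ℂ)
          = (n.choose k : ℂ) * ((n - k).choose (s - k) : ℂ) := by
        exact_mod_cast congrArg (Nat.cast (R := ℂ)) (Nat.choose_mul hks)
      have h3' : (s.choose k : ℂ) * (k.factorial : ℂ) * ((s - k).factorial : ℂ)
          = (s.factorial : ℂ) := by
        exact_mod_cast congrArg (Nat.cast (R := ℂ))
          (Nat.choose_mul_factorial_mul_factorial hks)
      simp only [hf, e1, e2]
      rw [e3, ← h3']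
      linear_combination
        (-((n.choose s : ℂ) * (s.choose k : ℂ) * (k.factorial : ℂ) * ((s - k).factorial : ℂ))
          * z ^ (m - s) * (starRingEnd ℂ z) ^ (n - s) * (ρ : ℂ) ^ k * (ρ : ℂ) ^ (s - k)
          * (-1 : ℂ) ^ (s - k)) * h1'
        + (-((m.choose k : ℂ) * ((m - k).choose (s - k) : ℂ) * (k.factorial : ℂ)
            * ((s - k).factorial : ℂ))
          * z ^ (m - s) * (starRingEnd ℂ z) ^ (n - s) * (ρ : ℂ) ^ k * (ρ : ℂ) ^ (s - k)
          * (-1 : ℂ) ^ (s - k)) * h2'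
    have halt : (∑ k ∈ Finset.range (s + 1), (-1 : ℂ) ^ (s - k) * (s.choose k : ℂ))
        = if s = 0 then 1 else 0 := by
      have hrefl := sum_range_reflect
        (fun j => (-1 : ℂ) ^ j * (s.choose (s - j) : ℂ)) (s + 1)
      simp only [Nat.add_sub_cancel] at hrefl
      calc ∑ k ∈ Finset.range (s + 1), (-1 : ℂ) ^ (s - k) * (s.choose k : ℂ)
          = ∑ k ∈ Finset.range (s + 1), (-1 : ℂ) ^ (s - k) * (s.choose (s - (s - k)) : ℂ) := by
            refine sum_congr rfl fun k hk => ?_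
            rw [mem_range] at hk
            have hkk : s - (s - k) = k := by omega
            rw [hkk]
        _ = ∑ k ∈ Finset.range (s + 1), (-1 : ℂ) ^ k * (s.choose (s - k) : ℂ) := hrefl
        _ = ∑ k ∈ Finset.range (s + 1), (-1 : ℂ) ^ k * (s.choose k : ℂ) := by
            refine sum_congr rfl fun k hk => ?_
            rw [mem_range] at hk
            rw [Nat.choose_symm (by omega)]
        _ = ((∑ i ∈ Finset.range (s + 1), ((-1) ^ i * s.choose i : ℤ) : ℤ) : ℂ) := by
            push_cast; ring
        _ = if s = 0 then 1 else 0 := by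
            rw [Int.alternating_sum_range_choose]
            split_ifs <;> simp
    rw [h1, halt]
    split_ifs with h0
    · subst h0; simp
    · rw [mul_zero]
  rw [sum_congr rfl hinner, Finset.sum_ite_eq' (Finset.range (N + 1)) 0
    (fun _ => z ^ m * (starRingEnd ℂ z) ^ n)]
  simp
end
end
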